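/- arXiv:1012.5214 — 8 statements merged into one kernel-verified Lean document; each statement's English description precedes it below -/
import Mathlib

section
/- Let G be a locally compact Hausdorff group, H a closed subgroup of G, and X a locally compact Hausdorff space with a continuous G-action. Then the following are equivalent: (1) there exists a locally compact Hausdorff H-space Y and a G-equivariant homeomorphism X ≅ G×_H Y; (2) there exists a continuous G-equivariant map φ: X → G/H. Moreover, in case (2), setting Y := φ⁻¹({eH}) (a closed H-invariant subset of X), the map Φ: G×_H Y → X, Φ([g,y]) = g·y, is a G-equivariant homeomorphism. -/
universe u

/-- The setoid on `G × Y` whose quotient is the induced space `G ×_H Y`: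
`(g, y) ∼ (g * h⁻¹, h • y)` for `h ∈ H`. -/
def indSetoid (G : Type u) [Group G] (H : Subgroup G) (Y : Type u)
    [MulAction (↥H) Y] : Setoid (G × Y) where
  r p q := ∃ h : ↥H, q.1 = p.1 * (h : G)⁻¹ ∧ q.2 = h • p.2
  iseqv := by
    constructor
    · intro p
      exact ⟨1, by simp, by simp⟩
    · rintro p q ⟨h, h1, h2⟩
      refine ⟨h⁻¹, by simp [h1], by simp [h2]⟩
    · rintro p q r ⟨h, h1, h2⟩ ⟨k, k1, k2⟩
      refine ⟨k * h, by simp [k1, h1, mul_assoc], by simp [k2, h2, mul_smul]⟩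

/-- The induced `G`-space `G ×_H Y`:  the quotient of `G × Y` by the
`H`-action `h • (g, y) = (g h⁻¹, h • y)`, endowed with the quotient
topology; `G` acts by left translation on the first coordinate. -/
abbrev IndSpace (G : Type u) [Group G] [TopologicalSpace G] (H : Subgroup G)
    (Y : Type u) [TopologicalSpace Y] [MulAction (↥H) Y] : Type u :=
  Quotient (indSetoid G H Y)

/-- Witness that the `G`-space `X` is (`G`-equivariantly homeomorphic to) a
space induced from a locally compact Hausdorff `H`-space `Y`. -/
structure InducedFrom (G : Type u) [Group G] [TopologicalSpace G]
    (H : Subgroup G) (X : Type u) [TopologicalSpace X] [MulAction G X] :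
    Type (u + 1) where
  /-- the `H`-space from which `X` is induced -/
  Y : Type u
  [tY : TopologicalSpace Y]
  [mY : MulAction (↥H) Y]
  locallyCompact : LocallyCompactSpace Y
  t2 : T2Space Y
  continuousSMul : ContinuousSMul (↥H) Y
  /-- the homeomorphism `G ×_H Y ≅ X` -/
  e : IndSpace G H Y ≃ₜ X
  equivariant : ∀ (g g' : G) (y : Y),
    e (Quotient.mk (indSetoid G H Y) (g' * g, y))
      = g' • e (Quotient.mk (indSetoid G H Y) (g, y))

/-- The (closed, `H`-invariant) global slice `Y = φ⁻¹({eH})` associated to a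
`G`-map `φ : X → G/H`. -/
abbrev SliceOf {G : Type u} [Group G] (H : Subgroup G) (X : Type u)
    [MulAction G X] (φ : X → G ⧸ H) : Type u :=
  {x : X // φ x = QuotientGroup.mk (1 : G)}

/-- The `H`-action on the slice `Y = φ⁻¹({eH})`, by restriction of the
`G`-action on `X`. -/
def sliceMulAction {G : Type u} [Group G] (H : Subgroup G) (X : Type u)
    [MulAction G X] (φ : X → G ⧸ H)
    (hφ : ∀ (g : G) (x : X), φ (g • x) = g • φ x) :
    MulAction (↥H) (SliceOf H X φ) where
  smul h x := ⟨(h : G) • (x : X), by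
    rw [hφ, x.2]
    have h1 : ((h : G) • (QuotientGroup.mk (1:G) : G ⧸ H))
        = QuotientGroup.mk ((h : G) * 1) := rfl
    rw [h1, mul_one]
    symm
    rw [QuotientGroup.eq]
    simpa using H.inv_mem h.2⟩
  one_smul x := Subtype.ext
    (show (((1 : ↥H) : G)) • (x : X) = (x : X) by simp)
  mul_smul h k x := Subtype.ext
    (show (((h * k : ↥H) : G)) • (x : X) = (h : G) • ((k : G) • (x : X)) by
      simp [mul_smul])

/-! The slice `Y = φ⁻¹(eH)` is `H`-invariant, and `[g, y] ↦ g • y` is a continuous bijection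
`G ×_H Y → X`: it is onto because `φ x = gH` puts `g⁻¹ • x` in `Y`, and one-to-one because
`g • y = g' • y'` forces `gH = g'H`. Its inverse is continuous although `x ↦ g` cannot be chosen
continuously: over the fibre product `{(g, x) | gH = φ x}` the choice is tautological, and that
fibre product maps openly onto `X` because `G → G/H` is open. Conversely `[g, y] ↦ gH` is a
continuous `G`-map `G ×_H Y → G/H`. -/

open Topology Function

theorem IsOpenQuotientMap.pullback_snd {A B C : Type*} [TopologicalSpace A] [TopologicalSpace B]
    [TopologicalSpace C] {f : A → C} {g : B → C} (hf : IsOpenQuotientMap f) (hg : Continuous g) :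
    IsOpenQuotientMap (Pullback.snd : f.Pullback g → B) := by
  refine ⟨fun b => ?_, continuous_snd.comp continuous_subtype_val, fun W hW => ?_⟩
  · obtain ⟨a, ha⟩ := hf.surjective (g b)
    exact ⟨⟨(a, b), ha⟩, rfl⟩
  obtain ⟨O, hO, rfl⟩ := isOpen_induced_iff.mp hW
  rw [isOpen_iff_forall_mem_open]
  rintro _ ⟨q, hqO, rfl⟩
  obtain ⟨U, V, hU, hV, haU, hbV, hUV⟩ := isOpen_prod_iff.mp hO q.1.1 q.1.2 hqO
  refine ⟨V ∩ g ⁻¹' (f '' U), ?_, hV.inter (hg.isOpen_preimage _ (hf.isOpenMap U hU)),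
    hbV, q.1.1, haU, q.2⟩
  rintro b ⟨hbV, a, haU, hab⟩
  exact ⟨⟨(a, b), hab⟩, hUV ⟨haU, hbV⟩, rfl⟩

namespace IndSpace

variable {G : Type u} [Group G] [TopologicalSpace G] {H : Subgroup G}
  {Y : Type u} [TopologicalSpace Y] [MulAction H Y]

def toCoset : IndSpace G H Y → G ⧸ H :=
  Quotient.lift (fun p => (p.1 : G ⧸ H)) <| by
    rintro ⟨g, y⟩ ⟨_, _⟩ ⟨h, rfl, -⟩
    exact QuotientGroup.eq.mpr (by simp)

theorem toCoset_mk (g : G) (y : Y) :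
    toCoset (Quotient.mk (indSetoid G H Y) (g, y)) = (g : G ⧸ H) := rfl

theorem continuous_toCoset : Continuous (toCoset : IndSpace G H Y → G ⧸ H) :=
  (QuotientGroup.continuous_mk.comp continuous_fst).quotient_lift _

end IndSpace

namespace InducedFrom

variable {G : Type u} [Group G] [TopologicalSpace G] {H : Subgroup G}
  {X : Type u} [TopologicalSpace X] [MulAction G X]

def toCoset (F : InducedFrom G H X) : X → G ⧸ H :=
  letI := F.tY; letI := F.mY; IndSpace.toCoset ∘ F.e.symm

theorem continuous_toCoset (F : InducedFrom G H X) : Continuous F.toCoset :=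
  letI := F.tY; letI := F.mY; IndSpace.continuous_toCoset.comp F.e.symm.continuous

theorem toCoset_smul (F : InducedFrom G H X) (g : G) (x : X) :
    F.toCoset (g • x) = g • F.toCoset x := by
  let := F.tY; let := F.mY
  obtain ⟨⟨g', y⟩, hx⟩ := Quotient.exists_rep (F.e.symm x)
  rw [← F.e.apply_symm_apply x, ← hx, ← F.equivariant]
  simp only [toCoset, Function.comp_apply, Homeomorph.symm_apply_apply, IndSpace.toCoset_mk,
    MulAction.Quotient.smul_mk, smul_eq_mul]

end InducedFrom

section Slice

variable {G : Type u} [Group G] {H : Subgroup G} {X : Type u} [MulAction G X] {φ : X → G ⧸ H}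

theorem inv_smul_mem_slice (hφ : ∀ (g : G) (x : X), φ (g • x) = g • φ x) {g : G} {x : X}
    (hx : φ x = g) : φ (g⁻¹ • x) = ((1 : G) : G ⧸ H) := by
  rw [hφ, hx, MulAction.Quotient.smul_mk, smul_eq_mul, inv_mul_cancel]

variable (hφ : ∀ (g : G) (x : X), φ (g • x) = g • φ x)

abbrev sliceSetoid : Setoid (G × SliceOf H X φ) :=
  @indSetoid G _ H _ (sliceMulAction H X φ hφ)

def sliceAct : Quotient (sliceSetoid hφ) → X :=
  Quotient.lift (fun p => p.1 • (p.2 : X)) <| by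
    rintro ⟨g, y⟩ ⟨_, _⟩ ⟨h, rfl, rfl⟩
    show g • (y : X) = (g * (h : G)⁻¹) • ((h : G) • (y : X))
    rw [smul_smul, inv_mul_cancel_right]

theorem sliceAct_injective : Injective (sliceAct hφ) := by
  rintro ⟨g, y⟩ ⟨g', y'⟩ (hgy : g • (y : X) = g' • (y' : X))
  have hcoset : (g : G ⧸ H) = g' := by
    simpa [hφ, y.2, y'.2, MulAction.Quotient.smul_mk] using congrArg φ hgy
  refine Quotient.sound ⟨⟨g'⁻¹ * g, QuotientGroup.eq.mp hcoset.symm⟩, by group, Subtype.ext ?_⟩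
  show (y' : X) = (g'⁻¹ * g) • (y : X)
  rw [mul_smul, hgy, inv_smul_smul]

variable [TopologicalSpace G] [TopologicalSpace X]

theorem continuous_sliceAct [ContinuousSMul G X] : Continuous (sliceAct hφ) :=
  (continuous_fst.smul (continuous_subtype_val.comp continuous_snd)).quotient_lift _

theorem isQuotientMap_sliceAct [IsTopologicalGroup G] [ContinuousSMul G X] (hφc : Continuous φ) :
    IsQuotientMap (sliceAct hφ) := by
  let μ : (QuotientGroup.mk : G → G ⧸ H).Pullback φ → Quotient (sliceSetoid hφ) :=
    fun q => ⟦(q.fst, ⟨q.fst⁻¹ • q.snd, inv_smul_mem_slice hφ q.2.symm⟩)⟧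
  have hfst : Continuous (Pullback.fst : (QuotientGroup.mk : G → G ⧸ H).Pullback φ → G) :=
    continuous_fst.comp continuous_subtype_val
  have hsnd : Continuous (Pullback.snd : (QuotientGroup.mk : G → G ⧸ H).Pullback φ → X) :=
    continuous_snd.comp continuous_subtype_val
  have hμ : Continuous μ :=
    continuous_quotient_mk'.comp (hfst.prodMk ((hfst.inv.smul hsnd).subtype_mk _))
  have hfactor : sliceAct hφ ∘ μ = Pullback.snd := funext fun q => smul_inv_smul q.fst q.snd
  refine .of_comp hμ (continuous_sliceAct hφ) ?_
  rw [hfactor]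
  exact (QuotientGroup.isOpenQuotientMap_mk.pullback_snd hφc).isQuotientMap

theorem isHomeomorph_sliceAct [IsTopologicalGroup G] [ContinuousSMul G X] (hφc : Continuous φ) :
    IsHomeomorph (sliceAct hφ) :=
  isHomeomorph_iff_isQuotientMap_injective.mpr
    ⟨isQuotientMap_sliceAct hφ hφc, sliceAct_injective hφ⟩

noncomputable def InducedFrom.ofSlice [IsTopologicalGroup G] [ContinuousSMul G X]
    [LocallyCompactSpace X] [T2Space X] (hH : IsClosed (H : Set G)) (hφc : Continuous φ) :
    InducedFrom G H X :=
  letI := sliceMulAction H X φ hφ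
  have : T1Space (G ⧸ H) := QuotientGroup.t1Space_iff.mpr hH
  { Y := SliceOf H X φ
    tY := instTopologicalSpaceSubtype
    locallyCompact :=
      (isClosed_singleton.preimage hφc).isClosedEmbedding_subtypeVal.locallyCompactSpace
    t2 := inferInstance
    continuousSMul := ⟨continuous_induced_rng.mpr <| (continuous_subtype_val.comp
      continuous_fst).smul (continuous_subtype_val.comp continuous_snd)⟩
    e := (isHomeomorph_sliceAct hφ hφc).homeomorph
    equivariant := fun g g' y => mul_smul g' g (y : X) }

end Slice

theorem induced_space_iff_map_to_coset_space_general
    (G : Type u) [Group G] [TopologicalSpace G] [IsTopologicalGroup G]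
    (H : Subgroup G) (hH : IsClosed (H : Set G))
    (X : Type u) [TopologicalSpace X] [LocallyCompactSpace X] [T2Space X]
    [MulAction G X] [ContinuousSMul G X] :
    (Nonempty (InducedFrom G H X) ↔
      ∃ φ : X → G ⧸ H, Continuous φ ∧ ∀ (g : G) (x : X), φ (g • x) = g • φ x) ∧
    (∀ (φ : X → G ⧸ H), Continuous φ →
      ∀ hφ : (∀ (g : G) (x : X), φ (g • x) = g • φ x),
      ∃ e : (@IndSpace G _ _ H (SliceOf H X φ) _ (sliceMulAction H X φ hφ)) ≃ₜ X,
        ∀ p : G × SliceOf H X φ,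
          e (Quotient.mk (@indSetoid G _ H (SliceOf H X φ) (sliceMulAction H X φ hφ)) p)
            = p.1 • (p.2 : X)) :=
  ⟨⟨fun ⟨F⟩ => ⟨F.toCoset, F.continuous_toCoset, F.toCoset_smul⟩,
    fun ⟨_, hφc, hφ⟩ => ⟨InducedFrom.ofSlice hφ hH hφc⟩⟩,
    fun _ hφc hφ => ⟨(isHomeomorph_sliceAct hφ hφc).homeomorph, fun _ => rfl⟩⟩

/-- Let `G` be a locally compact Hausdorff group, `H` a closed subgroup of
`G`, and `X` a locally compact Hausdorff `G`-space.  Then the following are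
equivalent: (1) there exists a locally compact Hausdorff `H`-space `Y` and a
`G`-equivariant homeomorphism `X ≅ G ×_H Y`; (2) there exists a continuous
`G`-equivariant map `φ : X → G/H`.  Moreover, in case (2), setting
`Y := φ⁻¹({eH})`, the map `Φ : G ×_H Y → X`, `Φ([g,y]) = g • y`, is a
(`G`-equivariant) homeomorphism. -/
theorem induced_space_iff_map_to_coset_space
    (G : Type u) [Group G] [TopologicalSpace G] [IsTopologicalGroup G]
    [LocallyCompactSpace G] [T2Space G]
    (H : Subgroup G) (hH : IsClosed (H : Set G))
    (X : Type u) [TopologicalSpace X] [LocallyCompactSpace X] [T2Space X]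
    [MulAction G X] [ContinuousSMul G X] :
    (Nonempty (InducedFrom G H X) ↔
      ∃ φ : X → G ⧸ H, Continuous φ ∧ ∀ (g : G) (x : X), φ (g • x) = g • φ x) ∧
    (∀ (φ : X → G ⧸ H), Continuous φ →
      ∀ hφ : (∀ (g : G) (x : X), φ (g • x) = g • φ x),
      ∃ e : (@IndSpace G _ _ H (SliceOf H X φ) _ (sliceMulAction H X φ hφ)) ≃ₜ X,
        ∀ p : G × SliceOf H X φ,
          e (Quotient.mk (@indSetoid G _ H (SliceOf H X φ) (sliceMulAction H X φ hφ)) p)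
            = p.1 • (p.2 : X)) :=
  induced_space_iff_map_to_coset_space_general G H hH X
end

section
/- Let G be a locally compact Hausdorff group with a left Haar measure, acting properly on a locally compact Hausdorff space X, and let β be a strongly continuous action of G by *-automorphisms on a C*-algebra B. Then for every x ∈ X, the evaluation map q_x: C₀(X×_G B) → B, q_x(F) = F(x), is a *-homomorphism whose image is exactly the fixed-point algebra B^{G_x} = {b ∈ B : β_k(b) = b for all k ∈ G_x}, and whose kernel is {F ∈ C₀(X×_G B) : F vanishes on the orbit G·x} = {F : F(x) = 0}. -/
/-!
Evaluation at `x` is a pointwise operation, so it is a `*`-homomorphism; equivariance puts its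
image inside `B^{G_x}` and shows that `F x = 0` forces `F` to vanish on `G • x`. The group acts
isometrically on `B`, since `*`-homomorphisms between C*-algebras are contractive.

For surjectivity, fix `b ∈ B^{G_x}` and `ε > 0`. Since the action is proper,
`{g | ε ≤ ‖g⁻¹ • b - b‖} • x` is closed, and it misses `x`. Take a bump function `φ` at `x`
supported away from it. Averaging, `y ↦ ∫ φ (g⁻¹ • y) • g • b dμ(g)` is equivariant and
continuous, and it vanishes off the compact set `G • supp φ`. Normalising it by
`∫ φ (g⁻¹ • y) dμ(g)` gives `F ∈ C₀(X ×_G B)` with `‖F‖ ≤ ‖b‖` and `‖F x - b‖ ≤ ε`. Repeating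
this with `ε = ‖r‖ / 2` on the remainders `r = b - F x`, and summing the geometric series that
results, gives an exact preimage of `b`.
-/

open MeasureTheory

/-- A continuous action of `G` on `X` is *proper* if the map
`G × X → X × X, (g,x) ↦ (g • x, x)` is proper, i.e. preimages of compact sets
are compact. -/
def ProperAction (G X : Type*) [SMul G X] [TopologicalSpace G]
    [TopologicalSpace X] : Prop :=
  ∀ K : Set (X × X), IsCompact K →
    IsCompact ((fun p : G × X => (p.1 • p.2, p.2)) ⁻¹' K)

/-- The generalized fixed-point algebra `C₀(X ×_Γ B)`:  bounded continuous
functions `F : X → B` with `F (g • x) = g • F x`, such that the induced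
function `‖F(·)‖` on the orbit space vanishes at infinity.  (Operations are
pointwise, the norm is the supremum norm.) -/
def IndAlg (Γ X B : Type*) [Group Γ] [TopologicalSpace X] [MulAction Γ X]
    [SMul Γ B] [TopologicalSpace B] [Norm B] : Set (X → B) :=
  {F | Continuous F ∧ (∀ (g : Γ) (x : X), F (g • x) = g • F x) ∧
    (∃ C : ℝ, ∀ x : X, ‖F x‖ ≤ C) ∧
    ∀ ε : ℝ, 0 < ε → ∃ K : Set (Quotient (MulAction.orbitRel Γ X)), IsCompact K ∧
      ∀ x : X, Quotient.mk (MulAction.orbitRel Γ X) x ∉ K → ‖F x‖ < ε}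

open Set Filter Topology MulAction

theorem ProperAction.properSMul {G X : Type*} [Group G] [TopologicalSpace G] [TopologicalSpace X]
    [MulAction G X] [ContinuousSMul G X] [LocallyCompactSpace X] [T2Space X]
    (h : ProperAction G X) : ProperSMul G X :=
  ⟨isProperMap_iff_isCompact_preimage.2 ⟨by fun_prop, fun K hK => h K hK⟩⟩

theorem isIsometricSMul_of_smul_star {G B : Type*} [Group G] [NormedRing B] [StarRing B]
    [CStarRing B] [NormedAlgebra ℂ B] [StarModule ℂ B] [CompleteSpace B]
    [MulSemiringAction G B] [SMulCommClass G ℂ B]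
    (hstar : ∀ (g : G) (b : B), g • star b = star (g • b)) : IsIsometricSMul G B := by
  let _ : CStarAlgebra B := {}
  have norm_smul_le (g : G) (b : B) : ‖g • b‖ ≤ ‖b‖ :=
    NonUnitalStarAlgHom.norm_apply_le
      ({ toFun := (g • ·), map_smul' := smul_comm g, map_zero' := smul_zero g,
         map_add' := smul_add g, map_mul' := smul_mul' g, map_star' := hstar g } :
        B →⋆ₙₐ[ℂ] B) b
  refine ⟨fun g => AddMonoidHomClass.isometry_of_norm (DistribSMul.toAddMonoidHom B g)
    fun b => le_antisymm (norm_smul_le g b) ?_⟩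
  simpa using norm_smul_le g⁻¹ (g • b)

theorem norm_smul_of_isIsometricSMul {G B : Type*} [Group G] [SeminormedAddGroup B]
    [DistribMulAction G B] [IsIsometricSMul G B] (g : G) (b : B) : ‖g • b‖ = ‖b‖ := by
  simpa using dist_smul g b 0

def orbitCocompact (G X : Type*) [Group G] [TopologicalSpace X] [MulAction G X] : Filter X :=
  comap (Quotient.mk (orbitRel G X)) (cocompact _)

namespace IndAlg

variable {G X B : Type*} [Group G] [TopologicalSpace X] [MulAction G X]

theorem mem_iff [SeminormedAddGroup B] [SMul G B] {F : X → B} :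
    F ∈ IndAlg G X B ↔ Continuous F ∧ (∀ (g : G) (x : X), F (g • x) = g • F x) ∧
      (∃ C : ℝ, ∀ x, ‖F x‖ ≤ C) ∧ Tendsto F (orbitCocompact G X) (𝓝 0) := by
  simp only [IndAlg, mem_ofPred_eq, Metric.tendsto_nhds, dist_zero_right, orbitCocompact,
    (hasBasis_cocompact.comap _).eventually_iff, mem_preimage, mem_compl_iff]

theorem smul_apply_of_mem_stabilizer [SMul G B] [TopologicalSpace B] [Norm B] {F : X → B}
    (hF : F ∈ IndAlg G X B) {x : X} {k : G} (hk : k ∈ stabilizer G x) : k • F x = F x := by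
  rw [← hF.2.1, mem_stabilizer_iff.1 hk]

theorem apply_eq_zero_of_mem_orbit [AddMonoid B] [DistribMulAction G B] [TopologicalSpace B]
    [Norm B] {F : X → B} (hF : F ∈ IndAlg G X B) {x : X} (hx : F x = 0) :
    ∀ y ∈ orbit G x, F y = 0 := by
  rintro _ ⟨g, rfl⟩
  rw [hF.2.1, hx, smul_zero]

theorem zero_mem [SeminormedAddGroup B] [DistribMulAction G B] : (0 : X → B) ∈ IndAlg G X B :=
  mem_iff.2 ⟨continuous_const, fun g y => (smul_zero g).symm, ⟨0, fun y => by simp⟩,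
    tendsto_const_nhds⟩

theorem add_mem [SeminormedAddCommGroup B] [DistribMulAction G B] {F₁ F₂ : X → B}
    (h₁ : F₁ ∈ IndAlg G X B) (h₂ : F₂ ∈ IndAlg G X B) : F₁ + F₂ ∈ IndAlg G X B := by
  obtain ⟨hc₁, he₁, ⟨C₁, hC₁⟩, ht₁⟩ := mem_iff.1 h₁
  obtain ⟨hc₂, he₂, ⟨C₂, hC₂⟩, ht₂⟩ := mem_iff.1 h₂
  refine mem_iff.2 ⟨hc₁.add hc₂, fun g y => by simp [he₁, he₂, smul_add],
    ⟨C₁ + C₂, fun y => (norm_add_le _ _).trans (add_le_add (hC₁ y) (hC₂ y))⟩, ?_⟩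
  rw [← add_zero (0 : B)]
  exact ht₁.add ht₂

theorem mul_mem [NormedRing B] [MulSemiringAction G B] {F₁ F₂ : X → B}
    (h₁ : F₁ ∈ IndAlg G X B) (h₂ : F₂ ∈ IndAlg G X B) : F₁ * F₂ ∈ IndAlg G X B := by
  obtain ⟨hc₁, he₁, ⟨C₁, hC₁⟩, ht₁⟩ := mem_iff.1 h₁
  obtain ⟨hc₂, he₂, ⟨C₂, hC₂⟩, -⟩ := mem_iff.1 h₂
  refine mem_iff.2 ⟨hc₁.mul hc₂, fun g y => by simp [he₁, he₂, smul_mul'],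
    ⟨C₁ * C₂, fun y => (norm_mul_le _ _).trans
      (mul_le_mul (hC₁ y) (hC₂ y) (norm_nonneg _) ((norm_nonneg _).trans (hC₁ y)))⟩, ?_⟩
  exact ht₁.zero_mul_isBoundedUnder_le (isBoundedUnder_of ⟨C₂, hC₂⟩)

theorem star_mem [SeminormedAddCommGroup B] [StarAddMonoid B] [NormedStarGroup B]
    [DistribMulAction G B] (hstar : ∀ (g : G) (b : B), g • star b = star (g • b)) {F : X → B}
    (hF : F ∈ IndAlg G X B) : star F ∈ IndAlg G X B := by
  obtain ⟨hc, he, ⟨C, hC⟩, ht⟩ := mem_iff.1 hF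
  refine mem_iff.2 ⟨hc.star, fun g y => by simp [he, hstar], ⟨C, fun y => by simpa using hC y⟩, ?_⟩
  rw [← star_zero]
  exact ht.star

theorem smul_mem {𝕜 : Type*} [NormedField 𝕜] [SeminormedAddCommGroup B] [NormedSpace 𝕜 B]
    [DistribMulAction G B] [SMulCommClass G 𝕜 B] (a : 𝕜) {F : X → B}
    (hF : F ∈ IndAlg G X B) : a • F ∈ IndAlg G X B := by
  obtain ⟨hc, he, ⟨C, hC⟩, ht⟩ := mem_iff.1 hF
  refine mem_iff.2 ⟨hc.const_smul a, fun g y => by simp [he, smul_comm g a],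
    ⟨‖a‖ * C, fun y => by
      simpa [norm_smul] using mul_le_mul_of_nonneg_left (hC y) (norm_nonneg a)⟩, ?_⟩
  rw [← smul_zero a]
  exact ht.const_smul a

theorem tsum_mem {ι : Type*} [NormedAddCommGroup B] [CompleteSpace B] [DistribMulAction G B]
    [ContinuousConstSMul G B] {F : ι → X → B} {u : ι → ℝ} (hF : ∀ i, F i ∈ IndAlg G X B)
    (hu : Summable u) (hFu : ∀ i y, ‖F i y‖ ≤ u i) :
    (fun y => ∑' i, F i y) ∈ IndAlg G X B := by
  simp only [mem_iff] at hF
  refine mem_iff.2 ⟨continuous_tsum (fun i => (hF i).1) hu hFu, fun g y => ?_,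
    ⟨∑' i, u i, fun y => tsum_of_norm_bounded hu.hasSum (hFu · y)⟩, ?_⟩
  · simp only [(hF _).2.1 g y]
    exact (Summable.of_norm_bounded hu (hFu · y)).tsum_const_smul g
  · simpa using tendsto_tsum_of_dominated_convergence hu (fun i => (hF i).2.2.2)
      (Eventually.of_forall fun y i => hFu i y)

theorem exists_apply_eq_of_approx [NormedAddCommGroup B] [CompleteSpace B]
    [DistribMulAction G B] [IsIsometricSMul G B] {x : X}
    (happrox : ∀ b : B, (∀ k ∈ stabilizer G x, k • b = b) → ∀ ε : ℝ, 0 < ε →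
      ∃ F ∈ IndAlg G X B, ‖F x - b‖ ≤ ε ∧ ∀ y, ‖F y‖ ≤ ‖b‖)
    {b : B} (hb : ∀ k ∈ stabilizer G x, k • b = b) : ∃ F ∈ IndAlg G X B, F x = b := by
  have happrox_half : ∀ b : B, (∀ k ∈ stabilizer G x, k • b = b) →
      ∃ F ∈ IndAlg G X B, ‖F x - b‖ ≤ ‖b‖ / 2 ∧ ∀ y, ‖F y‖ ≤ ‖b‖ := by
    intro b hb
    rcases eq_or_ne b 0 with rfl | hb0
    · exact ⟨0, zero_mem, by simp, by simp⟩
    · exact happrox b hb _ (half_pos (norm_pos_iff.2 hb0))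
  choose! A hA hAx hAb using happrox_half
  -- `r n` is what remains to be approximated after `n` steps
  set r : ℕ → B := fun n => (fun c => c - A c x)^[n] b
  have hr_succ (n : ℕ) : r (n + 1) = r n - A (r n) x := Function.iterate_succ_apply' _ _ _
  have hr_fix (n : ℕ) : ∀ k ∈ stabilizer G x, k • r n = r n := by
    induction n with
    | zero => exact hb
    | succ n ih =>
      intro k hk
      rw [hr_succ, smul_sub, ih k hk, smul_apply_of_mem_stabilizer (hA _ ih) hk]
  have hr_le (n : ℕ) : ‖r n‖ ≤ ‖b‖ * (1 / 2) ^ n := by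
    induction n with
    | zero => simp [r]
    | succ n ih =>
      rw [hr_succ, norm_sub_rev, pow_succ, ← mul_assoc]
      linarith [hAx _ (hr_fix n)]
  have hsum : Summable fun n : ℕ => ‖b‖ * (1 / 2 : ℝ) ^ n := summable_geometric_two.mul_left _
  have hA_le (n : ℕ) (y : X) : ‖A (r n) y‖ ≤ ‖b‖ * (1 / 2) ^ n :=
    (hAb _ (hr_fix n) y).trans (hr_le n)
  refine ⟨fun y => ∑' n, A (r n) y, tsum_mem (fun n => hA _ (hr_fix n)) hsum hA_le, ?_⟩
  have hr_lim : Tendsto r atTop (𝓝 0) := squeeze_zero_norm hr_le <| by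
    simpa using (tendsto_pow_atTop_nhds_zero_of_lt_one (r := (1 / 2 : ℝ)) (by norm_num)
      (by norm_num)).const_mul ‖b‖
  have htel (n : ℕ) : A (r n) x = r n - r (n + 1) := by rw [hr_succ]; abel
  simp only [htel]
  have hsummable : Summable fun n => r n - r (n + 1) :=
    .of_norm_bounded hsum fun n => htel n ▸ hA_le n x
  refine (hsummable.hasSum_iff_tendsto_nat.2 ?_).tsum_eq
  simp only [Finset.sum_range_sub']
  simpa [r] using tendsto_const_nhds.sub hr_lim

end IndAlg

section OrbitAverage

variable {G X E : Type*} [Group G] [MulAction G X] [NormedAddCommGroup E] [NormedSpace ℝ E]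
  {φ : X → ℝ}

noncomputable def orbitAverage [MeasurableSpace G] (μ : Measure G) (φ : X → ℝ) (v : G → E)
    (y : X) : E :=
  ∫ g, φ (g⁻¹ • y) • v g ∂μ

theorem orbitAverage_const [MeasurableSpace G] (μ : Measure G) [CompleteSpace E] (e : E) (y : X) :
    orbitAverage μ φ (fun _ => e) y = orbitAverage μ φ (1 : G → ℝ) y • e := by
  simp [orbitAverage, integral_smul_const]

theorem orbitAverage_smul_apply [MeasurableSpace G] [MeasurableMul G] (μ : Measure G)
    [μ.IsMulLeftInvariant] (v : G → E) (h : G) (y : X) :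
    orbitAverage μ φ v (h • y) = orbitAverage μ φ (fun g => v (h * g)) y := by
  rw [orbitAverage, ← integral_mul_left_eq_self _ h]
  simp [orbitAverage, mul_smul]

variable [TopologicalSpace X]

open scoped Pointwise in
theorem apply_inv_smul_eq_zero_of_notMem {L : Set X} {y : X} (hy : y ∈ L) {g : G}
    (hg : g ∉ {g : G | (g • tsupport φ ∩ L).Nonempty}) : φ (g⁻¹ • y) = 0 := by
  by_contra h
  exact hg ⟨y, by simpa using smul_mem_smul_set (a := g) (subset_tsupport φ h), hy⟩

theorem eventually_orbitAverage_eq_zero [MeasurableSpace G] (μ : Measure G)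
    (hφs : HasCompactSupport φ) (v : G → E) :
    ∀ᶠ y in orbitCocompact G X, orbitAverage μ φ v y = 0 := by
  refine mem_comap.2 ⟨_, (hφs.image continuous_quotient_mk').compl_mem_cocompact, fun y hy => ?_⟩
  refine integral_eq_zero_of_ae (ae_of_all _ fun g => ?_)
  by_contra h
  exact hy ⟨g⁻¹ • y, subset_tsupport φ (left_ne_zero_of_smul h), Quotient.sound (mem_orbit y g⁻¹)⟩

variable [TopologicalSpace G] [IsTopologicalGroup G] [ProperSMul G X]

theorem hasCompactSupport_orbitAverage_integrand (hφs : HasCompactSupport φ) (v : G → E) (y : X) :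
    HasCompactSupport fun g : G => φ (g⁻¹ • y) • v g :=
  .intro (ProperSMul.isCompact_setOfPred_inter_nonempty hφs isCompact_singleton) fun g hg => by
    rw [apply_inv_smul_eq_zero_of_notMem (φ := φ) (mem_singleton y) hg, zero_smul]

variable [MeasurableSpace G] [BorelSpace G] (μ : Measure G) [IsFiniteMeasureOnCompacts μ]

theorem integrable_orbitAverage_integrand (hφ : Continuous φ) (hφs : HasCompactSupport φ)
    {v : G → E} (hv : Continuous v) (y : X) :
    Integrable (fun g : G => φ (g⁻¹ • y) • v g) μ :=
  Continuous.integrable_of_hasCompactSupport (by fun_prop)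
    (hasCompactSupport_orbitAverage_integrand hφs v y)

theorem continuous_orbitAverage [LocallyCompactSpace X] (hφ : Continuous φ)
    (hφs : HasCompactSupport φ) {v : G → E} (hv : Continuous v) :
    Continuous (orbitAverage μ φ v) := by
  refine continuous_iff_continuousAt.2 fun y => ?_
  obtain ⟨L, hL, hLy⟩ := exists_compact_mem_nhds y
  refine (continuousOn_integral_of_compact_support
    (ProperSMul.isCompact_setOfPred_inter_nonempty hφs hL) (by fun_prop : Continuous _).continuousOn
    fun z g hz hg => ?_).continuousAt hLy
  rw [apply_inv_smul_eq_zero_of_notMem (φ := φ) hz hg, zero_smul]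

theorem orbitAverage_sub (hφ : Continuous φ) (hφs : HasCompactSupport φ) {v w : G → E}
    (hv : Continuous v) (hw : Continuous w) (y : X) :
    orbitAverage μ φ (v - w) y = orbitAverage μ φ v y - orbitAverage μ φ w y := by
  simp only [orbitAverage, Pi.sub_apply, smul_sub]
  exact integral_sub (integrable_orbitAverage_integrand μ hφ hφs hv y)
    (integrable_orbitAverage_integrand μ hφ hφs hw y)

theorem orbitAverage_smul_apply_of_forall_mul [μ.IsMulLeftInvariant] [CompleteSpace E]
    [DistribMulAction G E] [ContinuousConstSMul G E] (hφ : Continuous φ)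
    (hφs : HasCompactSupport φ) {v : G → E} (hv : Continuous v)
    (hv_mul : ∀ h g, v (h * g) = h • v g) (h : G) (y : X) :
    orbitAverage μ φ v (h • y) = h • orbitAverage μ φ v y := by
  let A := (DistribSMul.toAddMonoidHom E h).toRealLinearMap (continuous_const_smul h)
  rw [orbitAverage_smul_apply]
  simp only [orbitAverage, hv_mul]
  calc ∫ g, φ (g⁻¹ • y) • h • v g ∂μ = ∫ g, A (φ (g⁻¹ • y) • v g) ∂μ := by
        simp only [map_smul]
        rfl
    _ = h • ∫ g, φ (g⁻¹ • y) • v g ∂μ :=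
        A.integral_comp_comm (integrable_orbitAverage_integrand μ hφ hφs hv y)

theorem norm_orbitAverage_le (hφ : Continuous φ) (hφs : HasCompactSupport φ) (hφ0 : 0 ≤ φ)
    {v : G → E} {y : X} {C : ℝ} (hv : ∀ g, φ (g⁻¹ • y) ≠ 0 → ‖v g‖ ≤ C) :
    ‖orbitAverage μ φ v y‖ ≤ orbitAverage μ φ (1 : G → ℝ) y * C := by
  rw [orbitAverage, orbitAverage, ← integral_mul_const]
  refine norm_integral_le_of_norm_le
    ((integrable_orbitAverage_integrand μ hφ hφs continuous_const y).mul_const C)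
    (ae_of_all _ fun g => ?_)
  rcases eq_or_ne (φ (g⁻¹ • y)) 0 with h0 | h0
  · simp [h0]
  · simpa [norm_smul, abs_of_nonneg (hφ0 _)] using
      mul_le_mul_of_nonneg_left (hv g h0) (hφ0 (g⁻¹ • y))

theorem orbitAverage_one_pos [μ.IsOpenPosMeasure] (hφ : Continuous φ) (hφs : HasCompactSupport φ)
    (hφ0 : 0 ≤ φ) {y : X} (hφy : φ y ≠ 0) :
    0 < orbitAverage μ φ (1 : G → ℝ) y := by
  simpa [orbitAverage] using Continuous.integral_pos_of_hasCompactSupport_nonneg_nonzero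
    (μ := μ) (x := 1) (by fun_prop)
    (by simpa using hasCompactSupport_orbitAverage_integrand hφs (1 : G → ℝ) y)
    (fun g => hφ0 _) (by simpa using hφy)

end OrbitAverage

open scoped Pointwise in
theorem ProperSMul.eventually_nhds_norm_smul_sub_lt {G X B : Type*} [Group G] [TopologicalSpace G]
    [ContinuousInv G] [TopologicalSpace X] [MulAction G X] [ProperSMul G X]
    [SeminormedAddCommGroup B] [MulAction G B] {b : B} (hb : Continuous fun g : G => g • b) {x : X}
    (hfix : ∀ k ∈ stabilizer G x, k • b = b) {ε : ℝ} (hε : 0 < ε) :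
    ∀ᶠ y in 𝓝 x, ∀ g : G, g • y = x → ‖g • b - b‖ < ε := by
  set s : Set G := {g | ε ≤ ‖g⁻¹ • b - b‖}
  have hs : IsClosed s :=
    isClosed_le continuous_const ((hb.comp continuous_inv).sub continuous_const).norm
  have hx : x ∉ s • ({x} : Set X) := by
    rintro ⟨g, hg, _, rfl, hgx⟩
    have : ε ≤ 0 := by simpa [s, hfix g⁻¹ (inv_mem (mem_stabilizer_iff.2 hgx))] using hg
    linarith
  filter_upwards [(hs.smul_right_of_isCompact isCompact_singleton).isOpen_compl.mem_nhds hx]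
    with y hy g hgy
  by_contra! h
  exact hy ⟨g⁻¹, by simpa [s] using h, x, rfl, by rw [← hgy]; exact inv_smul_smul g y⟩

section Approximation

variable {G X B : Type*} [Group G] [TopologicalSpace G] [IsTopologicalGroup G]
  [MeasurableSpace G] [BorelSpace G] [TopologicalSpace X] [LocallyCompactSpace X] [MulAction G X]
  [ProperSMul G X]
  [NormedAddCommGroup B] [NormedSpace ℝ B] [CompleteSpace B] [DistribMulAction G B]
  [IsIsometricSMul G B] {x : X} {b : B} {ε : ℝ}

theorem exists_mem_indAlg_of_bump (μ : Measure G) [μ.IsHaarMeasure] {φ : X → ℝ}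
    (hφ : Continuous φ) (hφs : HasCompactSupport φ) (hφ0 : 0 ≤ φ) (hφx : φ x ≠ 0)
    (hb : Continuous fun g : G => g • b)
    (hφb : ∀ g : G, φ (g⁻¹ • x) ≠ 0 → ‖g • b - b‖ ≤ ε) :
    ∃ F ∈ IndAlg G X B, ‖F x - b‖ ≤ ε ∧ ∀ y, ‖F y‖ ≤ ‖b‖ := by
  set c := orbitAverage μ φ (1 : G → ℝ)
  set I := orbitAverage μ φ (· • b)
  have hcx : 0 < c x := orbitAverage_one_pos μ hφ hφs hφ0 hφx
  have hmax (y : X) : 0 < max (c y) (c x) := hcx.trans_le (le_max_right _ _)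
  -- dividing by `max (c y) (c x)` instead of `c y` keeps `F` continuous where `c` vanishes
  set F : X → B := fun y => (max (c y) (c x))⁻¹ • I y
  have hF_le (y : X) : ‖F y‖ ≤ ‖b‖ := by
    have hI : ‖I y‖ ≤ c y * ‖b‖ := norm_orbitAverage_le μ hφ hφs hφ0 fun g _ =>
      (norm_smul_of_isIsometricSMul g b).le
    rw [norm_smul, Real.norm_of_nonneg (inv_nonneg.2 (hmax y).le), inv_mul_le_iff₀ (hmax y)]
    exact hI.trans (mul_le_mul_of_nonneg_right (le_max_left _ _) (norm_nonneg b))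
  refine ⟨F, IndAlg.mem_iff.2 ⟨?_, fun h y => ?_, ⟨‖b‖, hF_le⟩, ?_⟩, ?_, hF_le⟩
  · exact (((continuous_orbitAverage μ hφ hφs continuous_const).max continuous_const).inv₀
      fun y => (hmax y).ne').smul (continuous_orbitAverage μ hφ hφs hb)
  · simp only [F, c, I]
    rw [orbitAverage_smul_apply, orbitAverage_smul_apply_of_forall_mul μ hφ hφs hb
      fun h g => mul_smul h g b]
    exact (map_real_smul (DistribSMul.toAddMonoidHom B h) (continuous_const_smul h) _ _).symm
  · refine tendsto_nhds_of_eventually_eq ?_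
    filter_upwards [eventually_orbitAverage_eq_zero μ hφs (· • b)] with y hy
    simp [F, I, hy]
  · have hFx : F x - b = (c x)⁻¹ • orbitAverage μ φ (fun g => g • b - b) x := by
      rw [show (fun g : G => g • b - b) = (· • b) - fun _ => b from rfl,
        orbitAverage_sub μ hφ hφs hb continuous_const, orbitAverage_const, smul_sub, smul_smul,
        inv_mul_cancel₀ hcx.ne', one_smul]
      simp [F, I]
    rw [hFx, norm_smul, Real.norm_of_nonneg (inv_nonneg.2 hcx.le), inv_mul_le_iff₀ hcx]
    exact norm_orbitAverage_le μ hφ hφs hφ0 hφb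

theorem exists_mem_indAlg_norm_sub_apply_le [T2Space X] (μ : Measure G) [μ.IsHaarMeasure]
    (hb : Continuous fun g : G => g • b) (hfix : ∀ k ∈ stabilizer G x, k • b = b) (hε : 0 < ε) :
    ∃ F ∈ IndAlg G X B, ‖F x - b‖ ≤ ε ∧ ∀ y, ‖F y‖ ≤ ‖b‖ := by
  obtain ⟨U, hU, hUo, hxU⟩ :=
    mem_nhds_iff.1 (ProperSMul.eventually_nhds_norm_smul_sub_lt hb hfix hε)
  obtain ⟨φ, hφx, hφs, hφU, hφ01⟩ := exists_continuousMap_one_of_isCompact_subset_isOpen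
    isCompact_singleton hUo (singleton_subset_iff.2 hxU)
  exact exists_mem_indAlg_of_bump μ φ.continuous hφs (fun y => (hφ01 y).1) (by simp [hφx rfl]) hb
    fun g hg => (hU (hφU (subset_tsupport _ hg)) g (smul_inv_smul g x)).le

end Approximation

theorem evaluation_of_generalized_fixedPointAlgebra_general
    (G : Type*) [Group G] [TopologicalSpace G] [IsTopologicalGroup G]
    [MeasurableSpace G] [BorelSpace G]
    (μ : Measure G) [μ.IsHaarMeasure]
    (X : Type*) [TopologicalSpace X] [LocallyCompactSpace X] [T2Space X]
    [MulAction G X] [ContinuousSMul G X] (hproper : ProperAction G X)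
    (B : Type*) [NormedRing B] [StarRing B] [CStarRing B] [NormedAlgebra ℂ B]
    [StarModule ℂ B] [CompleteSpace B]
    [MulSemiringAction G B] [SMulCommClass G ℂ B]
    (hstar : ∀ (g : G) (b : B), g • (star b) = star (g • b))
    (hcont : ∀ b : B, Continuous fun g : G => g • b)
    (x : X) :
    (∀ F₁ ∈ IndAlg G X B, ∀ F₂ ∈ IndAlg G X B,
        F₁ + F₂ ∈ IndAlg G X B ∧ F₁ * F₂ ∈ IndAlg G X B) ∧
    (∀ F ∈ IndAlg G X B, star F ∈ IndAlg G X B) ∧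
    (∀ (a : ℂ), ∀ F ∈ IndAlg G X B, a • F ∈ IndAlg G X B) ∧
    (∀ F₁ ∈ IndAlg G X B, ∀ F₂ ∈ IndAlg G X B,
        (F₁ + F₂) x = F₁ x + F₂ x ∧ (F₁ * F₂) x = F₁ x * F₂ x) ∧
    (∀ F ∈ IndAlg G X B, (star F) x = star (F x)) ∧
    (∀ (a : ℂ), ∀ F ∈ IndAlg G X B, (a • F) x = a • F x) ∧
    ((fun F : X → B => F x) '' IndAlg G X B
        = {b : B | ∀ k ∈ MulAction.stabilizer G x, k • b = b}) ∧
    ({F ∈ IndAlg G X B | F x = 0}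
        = {F ∈ IndAlg G X B | ∀ y ∈ MulAction.orbit G x, F y = 0}) := by
  have := hproper.properSMul
  have := isIsometricSMul_of_smul_star hstar
  refine ⟨fun F₁ h₁ F₂ h₂ => ⟨IndAlg.add_mem h₁ h₂, IndAlg.mul_mem h₁ h₂⟩,
    fun F hF => IndAlg.star_mem hstar hF, fun a F hF => IndAlg.smul_mem a hF,
    fun _ _ _ _ => ⟨rfl, rfl⟩, fun _ _ => rfl, fun _ _ _ => rfl, ?_, ?_⟩
  · ext b
    refine ⟨?_, fun hb => IndAlg.exists_apply_eq_of_approx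
      (fun b hb ε hε => exists_mem_indAlg_norm_sub_apply_le μ (hcont b) hb hε) hb⟩
    rintro ⟨F, hF, rfl⟩ k hk
    exact IndAlg.smul_apply_of_mem_stabilizer hF hk
  · ext F
    exact and_congr_right fun hF =>
      ⟨IndAlg.apply_eq_zero_of_mem_orbit hF, fun h => h x (mem_orbit_self x)⟩

/-- Let `G` be a locally compact Hausdorff group with a left Haar measure,
acting properly on a locally compact Hausdorff space `X`, and let `β` be a
strongly continuous action of `G` by `*`-automorphisms on a C*-algebra `B`
(here encoded by `MulSemiringAction G B` together with `ℂ`-linearity,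
`*`-preservation and strong continuity).  Then for every `x ∈ X` the
evaluation map `q_x : C₀(X ×_G B) → B, F ↦ F x` is a `*`-homomorphism (its
domain is closed under the pointwise operations, and evaluation respects
them), its image is exactly the fixed-point algebra
`B^{G_x} = {b : β_k b = b ∀ k ∈ G_x}`, and its kernel is
`{F : F vanishes on the orbit G • x} = {F : F x = 0}`. -/
theorem evaluation_of_generalized_fixedPointAlgebra
    (G : Type*) [Group G] [TopologicalSpace G] [IsTopologicalGroup G]
    [LocallyCompactSpace G] [T2Space G]
    [MeasurableSpace G] [BorelSpace G]
    (μ : Measure G) [μ.IsHaarMeasure]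
    (X : Type*) [TopologicalSpace X] [LocallyCompactSpace X] [T2Space X]
    [MulAction G X] [ContinuousSMul G X] (hproper : ProperAction G X)
    (B : Type*) [NormedRing B] [StarRing B] [CStarRing B] [NormedAlgebra ℂ B]
    [StarModule ℂ B] [CompleteSpace B]
    [MulSemiringAction G B] [SMulCommClass G ℂ B]
    (hstar : ∀ (g : G) (b : B), g • (star b) = star (g • b))
    (hcont : ∀ b : B, Continuous fun g : G => g • b)
    (x : X) :
    (∀ F₁ ∈ IndAlg G X B, ∀ F₂ ∈ IndAlg G X B,
        F₁ + F₂ ∈ IndAlg G X B ∧ F₁ * F₂ ∈ IndAlg G X B) ∧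
    (∀ F ∈ IndAlg G X B, star F ∈ IndAlg G X B) ∧
    (∀ (a : ℂ), ∀ F ∈ IndAlg G X B, a • F ∈ IndAlg G X B) ∧
    (∀ F₁ ∈ IndAlg G X B, ∀ F₂ ∈ IndAlg G X B,
        (F₁ + F₂) x = F₁ x + F₂ x ∧ (F₁ * F₂) x = F₁ x * F₂ x) ∧
    (∀ F ∈ IndAlg G X B, (star F) x = star (F x)) ∧
    (∀ (a : ℂ), ∀ F ∈ IndAlg G X B, (a • F) x = a • F x) ∧
    ((fun F : X → B => F x) '' IndAlg G X B
        = {b : B | ∀ k ∈ MulAction.stabilizer G x, k • b = b}) ∧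
    ({F ∈ IndAlg G X B | F x = 0}
        = {F ∈ IndAlg G X B | ∀ y ∈ MulAction.orbit G x, F y = 0}) :=
  evaluation_of_generalized_fixedPointAlgebra_general G μ X hproper B hstar hcont x
end

section
/- Let G be a locally compact Hausdorff group, K a compact subgroup of G, and β a strongly continuous action of G by *-automorphisms on a C*-algebra B. Then evaluation at the identity coset, F ↦ F(eK), is a *-isomorphism from C₀(G/K ×_G B) onto the fixed-point algebra B^K. -/
/-!
Every `G`-equivariant function on the homogeneous space `G/K` is determined by its value at
the identity coset, and that value is fixed by the stabilizer `K` of the identity coset.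
Conversely a `K`-fixed `b` extends to `gK ↦ g • b`, which is well defined, continuous when the
action is strongly continuous, and bounded because a `*`-automorphism of a C*-algebra is
isometric. Vanishing at infinity is automatic since the orbit space `G \ (G/K)` is a point.
-/

open MulAction

lemma norm_smul_eq_of_smul_star {G B : Type*} [Group G]
    [NormedRing B] [StarRing B] [CStarRing B] [NormedAlgebra ℂ B]
    [StarModule ℂ B] [CompleteSpace B] [MulSemiringAction G B] [SMulCommClass G ℂ B]
    (hstar : ∀ (g : G) (b : B), g • star b = star (g • b)) (g : G) (b : B) :
    ‖g • b‖ = ‖b‖ := by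
  let _ : CStarAlgebra B := { }
  let φ : B →⋆ₙₐ[ℂ] B :=
    { toFun := (g • ·)
      map_smul' := smul_comm g
      map_zero' := smul_zero g
      map_add' := smul_add g
      map_mul' := smul_mul' g
      map_star' := hstar g }
  exact NonUnitalStarAlgHom.norm_map φ (MulAction.injective g) b

section Equivariant

variable {G X B : Type*} [Group G] [MulAction G X] [SMul G B]

lemma eq_of_equivariant_of_apply_eq [IsPretransitive G X] {F₁ F₂ : X → B}
    (h₁ : ∀ (g : G) (x : X), F₁ (g • x) = g • F₁ x)
    (h₂ : ∀ (g : G) (x : X), F₂ (g • x) = g • F₂ x) {x₀ : X} (h : F₁ x₀ = F₂ x₀) :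
    F₁ = F₂ := by
  funext x
  obtain ⟨g, rfl⟩ := exists_smul_eq G x₀ x
  rw [h₁, h₂, h]

lemma smul_apply_eq_of_mem_stabilizer {F : X → B}
    (hF : ∀ (g : G) (x : X), F (g • x) = g • F x) {x : X} {g : G}
    (hg : g ∈ stabilizer G x) : g • F x = F x := by
  rw [← hF, mem_stabilizer_iff.mp hg]

lemma mem_indAlg_of_isPretransitive [TopologicalSpace X] [IsPretransitive G X]
    [TopologicalSpace B] [Norm B] {F : X → B} (hc : Continuous F)
    (hF : ∀ (g : G) (x : X), F (g • x) = g • F x) (hb : ∃ C : ℝ, ∀ x : X, ‖F x‖ ≤ C) :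
    F ∈ IndAlg G X B := by
  have := (pretransitive_iff_subsingleton_quotient G X).mp inferInstance
  exact ⟨hc, hF, hb, fun _ _ => ⟨Set.univ, isCompact_univ, fun x hx => absurd trivial hx⟩⟩

end Equivariant

section CosetOrbitMap

variable {G B : Type*} [Group G] [MulAction G B] (K : Subgroup G) (b : B)
  (hb : K ≤ stabilizer G b)

def cosetOrbitMap : G ⧸ K → B :=
  ofQuotientStabilizer G b ∘ Subgroup.quotientMapOfLE hb

@[simp]
lemma cosetOrbitMap_mk (g : G) : cosetOrbitMap K b hb (g : G ⧸ K) = g • b := by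
  simp [cosetOrbitMap]

lemma cosetOrbitMap_smul (g : G) (x : G ⧸ K) :
    cosetOrbitMap K b hb (g • x) = g • cosetOrbitMap K b hb x := by
  induction x using QuotientGroup.induction_on with
  | H h => rw [Quotient.smul_coe, cosetOrbitMap_mk, cosetOrbitMap_mk, smul_eq_mul, mul_smul]

lemma continuous_cosetOrbitMap [TopologicalSpace G] [TopologicalSpace B]
    (hcont : Continuous fun g : G => g • b) : Continuous (cosetOrbitMap K b hb) := by
  rw [isQuotientMap_quotient_mk'.continuous_iff]
  exact hcont.congr fun g => (cosetOrbitMap_mk K b hb g).symm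

end CosetOrbitMap

theorem evaluation_at_identity_coset_iso_general
    (G : Type*) [Group G] [TopologicalSpace G]
    (K : Subgroup G)
    (B : Type*) [NormedRing B] [StarRing B] [CStarRing B] [NormedAlgebra ℂ B]
    [StarModule ℂ B] [CompleteSpace B]
    [MulSemiringAction G B] [SMulCommClass G ℂ B]
    (hstar : ∀ (g : G) (b : B), g • (star b) = star (g • b))
    (hcont : ∀ b : B, Continuous fun g : G => g • b) :
    Set.BijOn (fun F : (G ⧸ K) → B => F (QuotientGroup.mk (1 : G)))
      (IndAlg G (G ⧸ K) B) {b : B | ∀ k : ↥K, (k : G) • b = b} ∧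
    (∀ F₁ F₂ : (G ⧸ K) → B,
      (F₁ + F₂) (QuotientGroup.mk (1 : G))
          = F₁ (QuotientGroup.mk (1 : G)) + F₂ (QuotientGroup.mk (1 : G)) ∧
      (F₁ * F₂) (QuotientGroup.mk (1 : G))
          = F₁ (QuotientGroup.mk (1 : G)) * F₂ (QuotientGroup.mk (1 : G))) ∧
    (∀ F : (G ⧸ K) → B,
      (star F) (QuotientGroup.mk (1 : G)) = star (F (QuotientGroup.mk (1 : G)))) ∧
    (∀ (a : ℂ) (F : (G ⧸ K) → B),
      (a • F) (QuotientGroup.mk (1 : G)) = a • F (QuotientGroup.mk (1 : G))) := by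
  refine ⟨⟨?mapsTo, ?injOn, ?surjOn⟩, fun _ _ => ⟨rfl, rfl⟩, fun _ => rfl, fun _ _ => rfl⟩
  case mapsTo =>
    rintro F ⟨-, hF, -, -⟩ k
    exact smul_apply_eq_of_mem_stabilizer hF (by simp)
  case injOn =>
    rintro F₁ ⟨-, h₁, -, -⟩ F₂ ⟨-, h₂, -, -⟩ h
    exact eq_of_equivariant_of_apply_eq h₁ h₂ h
  case surjOn =>
    intro b hb
    have hK : K ≤ stabilizer G b := fun k hk => hb ⟨k, hk⟩
    refine ⟨cosetOrbitMap K b hK, mem_indAlg_of_isPretransitive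
      (continuous_cosetOrbitMap K b hK (hcont b)) (cosetOrbitMap_smul K b hK)
      ⟨‖b‖, fun x => ?_⟩, by simp⟩
    induction x using QuotientGroup.induction_on with
    | H g => rw [cosetOrbitMap_mk, norm_smul_eq_of_smul_star hstar]

/-- Let `G` be a locally compact Hausdorff group, `K` a compact subgroup of
`G`, and `β` a strongly continuous action of `G` by `*`-automorphisms on a
C*-algebra `B`.  Then evaluation at the identity coset, `F ↦ F(eK)`, is a
`*`-isomorphism from `C₀(G/K ×_G B)` onto the fixed-point algebra `B^K`:
it is a bijection of `C₀(G/K ×_G B)` onto `B^K` which respects the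
(pointwise) sums, products, adjoints and scalar multiples. -/
theorem evaluation_at_identity_coset_iso
    (G : Type*) [Group G] [TopologicalSpace G] [IsTopologicalGroup G]
    [LocallyCompactSpace G] [T2Space G]
    (K : Subgroup G) (hK : IsCompact (K : Set G))
    (B : Type*) [NormedRing B] [StarRing B] [CStarRing B] [NormedAlgebra ℂ B]
    [StarModule ℂ B] [CompleteSpace B]
    [MulSemiringAction G B] [SMulCommClass G ℂ B]
    (hstar : ∀ (g : G) (b : B), g • (star b) = star (g • b))
    (hcont : ∀ b : B, Continuous fun g : G => g • b) :
    Set.BijOn (fun F : (G ⧸ K) → B => F (QuotientGroup.mk (1 : G)))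
      (IndAlg G (G ⧸ K) B) {b : B | ∀ k : ↥K, (k : G) • b = b} ∧
    (∀ F₁ F₂ : (G ⧸ K) → B,
      (F₁ + F₂) (QuotientGroup.mk (1 : G))
          = F₁ (QuotientGroup.mk (1 : G)) + F₂ (QuotientGroup.mk (1 : G)) ∧
      (F₁ * F₂) (QuotientGroup.mk (1 : G))
          = F₁ (QuotientGroup.mk (1 : G)) * F₂ (QuotientGroup.mk (1 : G))) ∧
    (∀ F : (G ⧸ K) → B,
      (star F) (QuotientGroup.mk (1 : G)) = star (F (QuotientGroup.mk (1 : G)))) ∧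
    (∀ (a : ℂ) (F : (G ⧸ K) → B),
      (a • F) (QuotientGroup.mk (1 : G)) = a • F (QuotientGroup.mk (1 : G))) :=
  evaluation_at_identity_coset_iso_general G K B hstar hcont
end

section
/- Let G be the subgroup of GL(2,ℤ) generated by R = [[0,-1],[1,0]] and S = [[1,0],[0,-1]] (the dihedral group of order 8), acting on the 2-torus 𝕋² = ℝ²/ℤ² by A·(v + ℤ²) = Av + ℤ². Then the image in 𝕋² of the triangle {(s,t) ∈ ℝ² : 0 ≤ t ≤ 1/2, 0 ≤ s ≤ t} is a topological fundamental domain for this action. -/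
/-- The rotation `R = [[0,-1],[1,0]]` as an element of `GL(2,ℤ)` (the units of
the ring of integer `2 × 2` matrices). -/
def Rgen : (Matrix (Fin 2) (Fin 2) ℤ)ˣ :=
  ⟨!![0, -1; 1, 0], !![0, 1; -1, 0], by decide, by decide⟩

/-- The reflection `S = [[1,0],[0,-1]]` as an element of `GL(2,ℤ)`. -/
def Sgen : (Matrix (Fin 2) (Fin 2) ℤ)ˣ :=
  ⟨!![1, 0; 0, -1], !![1, 0; 0, -1], by decide, by decide⟩

/-- The subgroup of `GL(2,ℤ)` generated by `R` and `S` (the dihedral group of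
order `8`). -/
def dihedralD4 : Subgroup (Matrix (Fin 2) (Fin 2) ℤ)ˣ :=
  Subgroup.closure {Rgen, Sgen}

/-- The `2`-torus `𝕋² = ℝ²/ℤ²`. -/
abbrev Torus2 : Type := AddCircle (1 : ℝ) × AddCircle (1 : ℝ)

/-- The action of an integer matrix `A` on the torus:
`A • (v + ℤ²) = A v + ℤ²`. -/
noncomputable def matTorusSMul (A : Matrix (Fin 2) (Fin 2) ℤ) (p : Torus2) :
    Torus2 :=
  (A 0 0 • p.1 + A 0 1 • p.2, A 1 0 • p.1 + A 1 1 • p.2)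

/-- The orbit relation of the action of the dihedral group `⟨R, S⟩ ≤ GL(2,ℤ)`
on `𝕋²`. -/
def d4Rel : Torus2 → Torus2 → Prop :=
  fun v w => ∃ A : (Matrix (Fin 2) (Fin 2) ℤ)ˣ,
    A ∈ dihedralD4 ∧ matTorusSMul (A : Matrix (Fin 2) (Fin 2) ℤ) v = w

/-- The image in `𝕋²` of the triangle
`{(s,t) : 0 ≤ t ≤ 1/2, 0 ≤ s ≤ t} ⊆ ℝ²`. -/
noncomputable def triangleImage : Set Torus2 :=
  (fun st : ℝ × ℝ =>
      ((st.1 : AddCircle (1 : ℝ)), (st.2 : AddCircle (1 : ℝ)))) ''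
    {st : ℝ × ℝ | 0 ≤ st.2 ∧ st.2 ≤ 1 / 2 ∧ 0 ≤ st.1 ∧ st.1 ≤ st.2}

/-! ### Auxiliary material -/

/-- The eight matrices of the dihedral group `D₄ ≤ GL(2,ℤ)`. -/
def D4L : List (Matrix (Fin 2) (Fin 2) ℤ) :=
  [!![1,0;0,1], !![0,-1;1,0], !![-1,0;0,-1], !![0,1;-1,0],
   !![1,0;0,-1], !![0,1;1,0], !![-1,0;0,1], !![0,-1;-1,0]]

lemma D4L_mul : ∀ a ∈ D4L, ∀ b ∈ D4L, a * b ∈ D4L := by decide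

lemma D4L_inv : ∀ a ∈ D4L, ∃ b ∈ D4L, a * b = 1 ∧ b * a = 1 := by decide

lemma val_mem_D4L {A : (Matrix (Fin 2) (Fin 2) ℤ)ˣ} (hA : A ∈ dihedralD4) :
    (A : Matrix (Fin 2) (Fin 2) ℤ) ∈ D4L := by
  induction hA using Subgroup.closure_induction with
  | mem x hx => rcases hx with h | h <;> subst h <;> decide
  | one => decide
  | mul x y hx hy ihx ihy => rw [Units.val_mul]; exact D4L_mul _ ihx _ ihy
  | inv x hx ih =>
    obtain ⟨b, hb, hab, hba⟩ := D4L_inv _ ih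
    have hx' : (x⁻¹ : (Matrix (Fin 2) (Fin 2) ℤ)ˣ).val = b := by
      calc (x⁻¹ : (Matrix (Fin 2) (Fin 2) ℤ)ˣ).val
          = (x⁻¹ : (Matrix (Fin 2) (Fin 2) ℤ)ˣ).val * ((x : Matrix (Fin 2) (Fin 2) ℤ) * b) := by
            rw [hab, mul_one]
        _ = ((x⁻¹ : (Matrix (Fin 2) (Fin 2) ℤ)ˣ).val * (x : Matrix (Fin 2) (Fin 2) ℤ)) * b := by
            rw [mul_assoc]
        _ = b := by rw [Units.inv_mul, one_mul]
    rw [hx']; exact hb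

lemma exists_unit_of_mem_D4L : ∀ m ∈ D4L, ∃ A : (Matrix (Fin 2) (Fin 2) ℤ)ˣ,
    A ∈ dihedralD4 ∧ (A : Matrix (Fin 2) (Fin 2) ℤ) = m := by
  have hR : Rgen ∈ dihedralD4 := Subgroup.subset_closure (by left; rfl)
  have hS : Sgen ∈ dihedralD4 := Subgroup.subset_closure (by right; rfl)
  intro m hm
  fin_cases hm
  · exact ⟨1, one_mem _, by decide⟩
  · exact ⟨Rgen, hR, rfl⟩
  · exact ⟨Rgen * Rgen, mul_mem hR hR, by decide⟩
  · exact ⟨Rgen * Rgen * Rgen, mul_mem (mul_mem hR hR) hR, by decide⟩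
  · exact ⟨Sgen, hS, rfl⟩
  · exact ⟨Rgen * Sgen, mul_mem hR hS, by decide⟩
  · exact ⟨Rgen * Rgen * Sgen, mul_mem (mul_mem hR hR) hS, by decide⟩
  · exact ⟨Rgen * Rgen * Rgen * Sgen, mul_mem (mul_mem (mul_mem hR hR) hR) hS, by decide⟩

lemma AC.coe_eq_coe_iff {x y : ℝ} :
    (↑x : AddCircle (1 : ℝ)) = ↑y ↔ ∃ n : ℤ, y - x = n := by
  rw [QuotientAddGroup.eq]
  constructor
  · rintro h
    rw [AddSubgroup.mem_zmultiples_iff] at h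
    obtain ⟨n, hn⟩ := h
    exact ⟨n, by rw [zsmul_eq_mul, mul_one] at hn; linarith⟩
  · rintro ⟨n, hn⟩
    rw [AddSubgroup.mem_zmultiples_iff]
    exact ⟨n, by rw [zsmul_eq_mul, mul_one]; linarith⟩

lemma matTorusSMul_mul (A B : Matrix (Fin 2) (Fin 2) ℤ) (p : Torus2) :
    matTorusSMul (A * B) p = matTorusSMul A (matTorusSMul B p) := by
  simp only [matTorusSMul, Matrix.mul_apply, Fin.sum_univ_two, add_smul, mul_smul, smul_add,
    Prod.mk.injEq]
  constructor <;> abel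

lemma matTorusSMul_one (p : Torus2) : matTorusSMul 1 p = p := by
  simp [matTorusSMul, Matrix.one_apply]

lemma matTorusSMul_continuous (A : Matrix (Fin 2) (Fin 2) ℤ) :
    Continuous (matTorusSMul A) := by
  unfold matTorusSMul
  fun_prop

lemma d4_equiv : Equivalence d4Rel where
  refl v := ⟨1, one_mem _, by rw [Units.val_one, matTorusSMul_one]⟩
  symm := by
    rintro v w ⟨A, hA, rfl⟩
    exact ⟨A⁻¹, inv_mem hA, by rw [← matTorusSMul_mul, Units.inv_mul, matTorusSMul_one]⟩
  trans := by
    rintro u v w ⟨A, hA, rfl⟩ ⟨B, hB, rfl⟩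
    exact ⟨B * A, mul_mem hB hA, by rw [Units.val_mul, matTorusSMul_mul]⟩

lemma halfIco_sub {a b : ℝ} (ha0 : 0 ≤ a) (ha : a ≤ 1/2) (hb0 : 0 ≤ b) (hb : b ≤ 1/2)
    {n : ℤ} (h : b - a = n) : b = a := by
  have h1 : (-1 : ℤ) < n := by exact_mod_cast show (-1:ℝ) < n by rw [← h]; linarith
  have h2 : n < 1 := by exact_mod_cast show (n:ℝ) < 1 by rw [← h]; linarith
  have h0 : n = 0 := by omega
  subst h0
  push_cast at h
  linarith

lemma halfIco_add {a b : ℝ} (ha0 : 0 ≤ a) (ha : a ≤ 1/2) (hb0 : 0 ≤ b) (hb : b ≤ 1/2)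
    {n : ℤ} (h : b + a = n) : b = a := by
  have h1 : (0 : ℤ) ≤ n := by exact_mod_cast show (0:ℝ) ≤ n by rw [← h]; linarith
  have h2 : n ≤ 1 := by exact_mod_cast show (n:ℝ) ≤ 1 by rw [← h]; linarith
  have h0 : n = 0 ∨ n = 1 := by omega
  rcases h0 with h0 | h0 <;> subst h0 <;> push_cast at h <;> linarith

lemma inj_core {m : Matrix (Fin 2) (Fin 2) ℤ} (hm : m ∈ D4L) {s t s' t' : ℝ}
    (ht0 : 0 ≤ t) (ht2 : t ≤ 1/2) (hs0 : 0 ≤ s) (hst : s ≤ t)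
    (ht0' : 0 ≤ t') (ht2' : t' ≤ 1/2) (hs0' : 0 ≤ s') (hst' : s' ≤ t')
    (h : matTorusSMul m (↑s, ↑t) = (↑s', ↑t')) : s' = s ∧ t' = t := by
  have hs2 : s ≤ 1/2 := le_trans hst ht2
  have hs2' : s' ≤ 1/2 := le_trans hst' ht2'
  fin_cases hm <;>
    simp only [matTorusSMul, Matrix.of_apply, Matrix.cons_val_zero, Matrix.cons_val_one,
      Matrix.head_cons, zero_smul, one_smul, neg_smul, zero_add, add_zero,
      ← QuotientAddGroup.mk_neg, Prod.mk.injEq] at h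
  -- 1 : (s, t) ↦ (s, t)
  · obtain ⟨n1, hn1⟩ := AC.coe_eq_coe_iff.mp h.1
    obtain ⟨n2, hn2⟩ := AC.coe_eq_coe_iff.mp h.2
    exact ⟨halfIco_sub hs0 hs2 hs0' hs2' hn1, halfIco_sub ht0 ht2 ht0' ht2' hn2⟩
  -- R : (s, t) ↦ (-t, s)
  · obtain ⟨n1, hn1⟩ := AC.coe_eq_coe_iff.mp h.1
    obtain ⟨n2, hn2⟩ := AC.coe_eq_coe_iff.mp h.2
    have e1 : s' = t := halfIco_add ht0 ht2 hs0' hs2' (n := n1) (by linarith)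
    have e2 : t' = s := halfIco_sub hs0 hs2 ht0' ht2' (n := n2) (by linarith)
    have : s = t := le_antisymm hst (by rw [← e1, ← e2] at hst ⊢; linarith)
    exact ⟨by linarith, by linarith⟩
  -- R² : (s, t) ↦ (-s, -t)
  · obtain ⟨n1, hn1⟩ := AC.coe_eq_coe_iff.mp h.1
    obtain ⟨n2, hn2⟩ := AC.coe_eq_coe_iff.mp h.2
    exact ⟨halfIco_add hs0 hs2 hs0' hs2' (n := n1) (by linarith), halfIco_add ht0 ht2 ht0' ht2' (n := n2) (by linarith)⟩
  -- R³ : (s, t) ↦ (t, -s)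
  · obtain ⟨n1, hn1⟩ := AC.coe_eq_coe_iff.mp h.1
    obtain ⟨n2, hn2⟩ := AC.coe_eq_coe_iff.mp h.2
    have e1 : s' = t := halfIco_sub ht0 ht2 hs0' hs2' (n := n1) (by linarith)
    have e2 : t' = s := halfIco_add hs0 hs2 ht0' ht2' (n := n2) (by linarith)
    have : s = t := le_antisymm hst (by rw [← e1, ← e2] at hst ⊢; linarith)
    exact ⟨by linarith, by linarith⟩
  -- S : (s, t) ↦ (s, -t)
  · obtain ⟨n1, hn1⟩ := AC.coe_eq_coe_iff.mp h.1
    obtain ⟨n2, hn2⟩ := AC.coe_eq_coe_iff.mp h.2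
    exact ⟨halfIco_sub hs0 hs2 hs0' hs2' (n := n1) (by linarith), halfIco_add ht0 ht2 ht0' ht2' (n := n2) (by linarith)⟩
  -- RS : (s, t) ↦ (t, s)
  · obtain ⟨n1, hn1⟩ := AC.coe_eq_coe_iff.mp h.1
    obtain ⟨n2, hn2⟩ := AC.coe_eq_coe_iff.mp h.2
    have e1 : s' = t := halfIco_sub ht0 ht2 hs0' hs2' (n := n1) (by linarith)
    have e2 : t' = s := halfIco_sub hs0 hs2 ht0' ht2' (n := n2) (by linarith)
    have : s = t := le_antisymm hst (by rw [← e1, ← e2] at hst ⊢; linarith)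
    exact ⟨by linarith, by linarith⟩
  -- R²S : (s, t) ↦ (-s, t)
  · obtain ⟨n1, hn1⟩ := AC.coe_eq_coe_iff.mp h.1
    obtain ⟨n2, hn2⟩ := AC.coe_eq_coe_iff.mp h.2
    exact ⟨halfIco_add hs0 hs2 hs0' hs2' (n := n1) (by linarith), halfIco_sub ht0 ht2 ht0' ht2' (n := n2) (by linarith)⟩
  -- R³S : (s, t) ↦ (-t, -s)
  · obtain ⟨n1, hn1⟩ := AC.coe_eq_coe_iff.mp h.1
    obtain ⟨n2, hn2⟩ := AC.coe_eq_coe_iff.mp h.2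
    have e1 : s' = t := halfIco_add ht0 ht2 hs0' hs2' (n := n1) (by linarith)
    have e2 : t' = s := halfIco_add hs0 hs2 ht0' ht2' (n := n2) (by linarith)
    have : s = t := le_antisymm hst (by rw [← e1, ← e2] at hst ⊢; linarith)
    exact ⟨by linarith, by linarith⟩

lemma d4Rel_negFst (x y : ℝ) :
    d4Rel ((↑x : AddCircle (1:ℝ)), (↑y : AddCircle (1:ℝ))) (↑(-x), ↑y) := by
  have hR : Rgen ∈ dihedralD4 := Subgroup.subset_closure (by left; rfl)
  have hS : Sgen ∈ dihedralD4 := Subgroup.subset_closure (by right; rfl)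
  refine ⟨Rgen * Rgen * Sgen, mul_mem (mul_mem hR hR) hS, ?_⟩
  have hval : ((Rgen * Rgen * Sgen : (Matrix (Fin 2) (Fin 2) ℤ)ˣ) : Matrix (Fin 2) (Fin 2) ℤ)
      = !![-1,0;0,1] := by decide
  rw [hval]
  simp only [matTorusSMul, Matrix.of_apply, Matrix.cons_val_zero, Matrix.cons_val_one,
    Matrix.head_cons, zero_smul, one_smul, neg_smul, zero_add, add_zero,
    ← QuotientAddGroup.mk_neg]

lemma d4Rel_negSnd (x y : ℝ) :
    d4Rel ((↑x : AddCircle (1:ℝ)), (↑y : AddCircle (1:ℝ))) (↑x, ↑(-y)) := by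
  have hS : Sgen ∈ dihedralD4 := Subgroup.subset_closure (by right; rfl)
  refine ⟨Sgen, hS, ?_⟩
  have hval : ((Sgen : (Matrix (Fin 2) (Fin 2) ℤ)ˣ) : Matrix (Fin 2) (Fin 2) ℤ)
      = !![1,0;0,-1] := rfl
  rw [hval]
  simp only [matTorusSMul, Matrix.of_apply, Matrix.cons_val_zero, Matrix.cons_val_one,
    Matrix.head_cons, zero_smul, one_smul, neg_smul, zero_add, add_zero,
    ← QuotientAddGroup.mk_neg]

lemma d4Rel_swap (x y : ℝ) :
    d4Rel ((↑x : AddCircle (1:ℝ)), (↑y : AddCircle (1:ℝ))) (↑y, ↑x) := by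
  have hR : Rgen ∈ dihedralD4 := Subgroup.subset_closure (by left; rfl)
  have hS : Sgen ∈ dihedralD4 := Subgroup.subset_closure (by right; rfl)
  refine ⟨Rgen * Sgen, mul_mem hR hS, ?_⟩
  have hval : ((Rgen * Sgen : (Matrix (Fin 2) (Fin 2) ℤ)ˣ) : Matrix (Fin 2) (Fin 2) ℤ)
      = !![0,1;1,0] := by decide
  rw [hval]
  simp only [matTorusSMul, Matrix.of_apply, Matrix.cons_val_zero, Matrix.cons_val_one,
    Matrix.head_cons, zero_smul, one_smul, neg_smul, zero_add, add_zero]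

lemma coe_neg_eq_coe_one_sub (x : ℝ) :
    ((-x : ℝ) : AddCircle (1:ℝ)) = ((1 - x : ℝ) : AddCircle (1:ℝ)) := by
  rw [show (1 - x : ℝ) = -x + 1 by ring, AddCircle.coe_add_period]

lemma surj_core (v : Torus2) : ∃ z ∈ triangleImage, d4Rel v z := by
  haveI : Fact ((0:ℝ) < 1) := ⟨zero_lt_one⟩
  obtain ⟨v1, v2⟩ := v
  obtain ⟨x, hx, hxv⟩ := AddCircle.eq_coe_Ico v1
  obtain ⟨y, hy, hyv⟩ := AddCircle.eq_coe_Ico v2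
  subst hxv; subst hyv
  obtain ⟨x', hx'0, hx'2, hrel1⟩ : ∃ x' : ℝ, 0 ≤ x' ∧ x' ≤ 1/2 ∧
      d4Rel ((↑x : AddCircle (1:ℝ)), (↑y : AddCircle (1:ℝ))) (↑x', ↑y) := by
    by_cases h : x ≤ 1/2
    · exact ⟨x, hx.1, h, d4_equiv.refl _⟩
    · refine ⟨1 - x, by linarith [hx.2], by linarith, ?_⟩
      rw [← coe_neg_eq_coe_one_sub]
      exact d4Rel_negFst x y
  obtain ⟨y', hy'0, hy'2, hrel2⟩ : ∃ y' : ℝ, 0 ≤ y' ∧ y' ≤ 1/2 ∧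
      d4Rel ((↑x' : AddCircle (1:ℝ)), (↑y : AddCircle (1:ℝ))) (↑x', ↑y') := by
    by_cases h : y ≤ 1/2
    · exact ⟨y, hy.1, h, d4_equiv.refl _⟩
    · refine ⟨1 - y, by linarith [hy.2], by linarith, ?_⟩
      rw [← coe_neg_eq_coe_one_sub]
      exact d4Rel_negSnd x' y
  have hrel : d4Rel ((↑x : AddCircle (1:ℝ)), (↑y : AddCircle (1:ℝ))) (↑x', ↑y') :=
    d4_equiv.trans hrel1 hrel2
  by_cases hxy : x' ≤ y'
  · exact ⟨(↑x', ↑y'), ⟨(x', y'), ⟨hy'0, hy'2, hx'0, hxy⟩, rfl⟩, hrel⟩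
  · refine ⟨(↑y', ↑x'), ⟨(y', x'), ⟨hx'0, hx'2, hy'0, le_of_not_ge hxy⟩, rfl⟩, ?_⟩
    exact d4_equiv.trans hrel (d4Rel_swap x' y')

/-- Let `G ≤ GL(2,ℤ)` be generated by `R = [[0,-1],[1,0]]` and
`S = [[1,0],[0,-1]]` (the dihedral group of order 8), acting on
`𝕋² = ℝ²/ℤ²` by `A • (v + ℤ²) = A v + ℤ²`.  Then the image in `𝕋²` of the
triangle `{(s,t) : 0 ≤ t ≤ 1/2, 0 ≤ s ≤ t}` is a topological fundamental
domain for this action:  it is closed, and the map sending a point of it to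
its orbit is a homeomorphism onto the orbit space `G\𝕋²` (with its quotient
topology). -/
theorem triangle_is_fundamental_domain_for_D4 :
    IsClosed triangleImage ∧
    IsHomeomorph fun z : ↥triangleImage => Quot.mk d4Rel (z : Torus2) := by
  -- compactness of the triangle
  have hKcl : IsClosed {st : ℝ × ℝ | 0 ≤ st.2 ∧ st.2 ≤ 1 / 2 ∧ 0 ≤ st.1 ∧ st.1 ≤ st.2} := by
    have h1 : IsClosed {st : ℝ × ℝ | 0 ≤ st.2} := isClosed_le continuous_const continuous_snd
    have h2 : IsClosed {st : ℝ × ℝ | st.2 ≤ 1 / 2} := isClosed_le continuous_snd continuous_const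
    have h3 : IsClosed {st : ℝ × ℝ | 0 ≤ st.1} := isClosed_le continuous_const continuous_fst
    have h4 : IsClosed {st : ℝ × ℝ | st.1 ≤ st.2} := isClosed_le continuous_fst continuous_snd
    exact h1.inter (h2.inter (h3.inter h4))
  have hKc : IsCompact {st : ℝ × ℝ | 0 ≤ st.2 ∧ st.2 ≤ 1 / 2 ∧ 0 ≤ st.1 ∧ st.1 ≤ st.2} := by
    refine IsCompact.of_isClosed_subset (s := Set.Icc (0:ℝ) (1/2) ×ˢ Set.Icc (0:ℝ) (1/2))
      (isCompact_Icc.prod isCompact_Icc) hKcl ?_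
    rintro ⟨s, t⟩ ⟨h1, h2, h3, h4⟩
    exact ⟨⟨h3, le_trans h4 h2⟩, ⟨h1, h2⟩⟩
  have hcont : Continuous fun st : ℝ × ℝ =>
      (((st.1 : ℝ) : AddCircle (1:ℝ)), ((st.2 : ℝ) : AddCircle (1:ℝ))) := by
    exact (continuous_quotient_mk'.comp continuous_fst).prodMk
      (continuous_quotient_mk'.comp continuous_snd)
  have hTc : IsCompact triangleImage := hKc.image hcont
  refine ⟨hTc.isClosed, ?_⟩
  haveI : CompactSpace ↥triangleImage := isCompact_iff_compactSpace.mp hTc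
  rw [isHomeomorph_iff_continuous_isClosedMap_bijective]
  refine ⟨continuous_quot_mk.comp continuous_subtype_val, ?_, ?_, ?_⟩
  · -- closed map
    intro C hC
    have hCc : IsCompact (Subtype.val '' C) := hC.isCompact.image continuous_subtype_val
    rw [← (isQuotientMap_quot_mk (r := d4Rel)).isClosed_preimage]
    have key : Quot.mk d4Rel ⁻¹'
        ((fun z : ↥triangleImage => Quot.mk d4Rel (z : Torus2)) '' C)
        = ⋃ m ∈ D4L, matTorusSMul m '' (Subtype.val '' C) := by
      ext w
      simp only [Set.mem_preimage, Set.mem_image, Set.mem_iUnion]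
      constructor
      · rintro ⟨z, hzC, hz⟩
        have hrel : d4Rel (z : Torus2) w := d4_equiv.eqvGen_iff.mp (Quot.eq.mp hz)
        obtain ⟨A, hA, hAw⟩ := hrel
        exact ⟨(A : Matrix (Fin 2) (Fin 2) ℤ), val_mem_D4L hA,
          (z : Torus2), ⟨z, hzC, rfl⟩, hAw⟩
      · rintro ⟨m, hm, p, ⟨z, hzC, rfl⟩, hw⟩
        obtain ⟨A, hA, hAval⟩ := exists_unit_of_mem_D4L m hm
        have hrel : d4Rel (z : Torus2) w := ⟨A, hA, by rw [hAval, hw]⟩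
        exact ⟨z, hzC, Quot.sound hrel⟩
    rw [key]
    refine Set.Finite.isClosed_biUnion (List.finite_toSet D4L) ?_
    intro m _
    exact (hCc.image (matTorusSMul_continuous m)).isClosed
  · -- injective
    rintro ⟨z, hz⟩ ⟨z', hz'⟩ h
    simp only at h
    have hrel : d4Rel z z' := d4_equiv.eqvGen_iff.mp (Quot.eq.mp h)
    obtain ⟨A, hA, hAeq⟩ := hrel
    obtain ⟨⟨s, t⟩, ⟨ht0, ht2, hs0, hst⟩, hzeq⟩ := hz
    obtain ⟨⟨s', t'⟩, ⟨ht0', ht2', hs0', hst'⟩, hzeq'⟩ := hz'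
    have hzeq2 : ((↑s : AddCircle (1:ℝ)), (↑t : AddCircle (1:ℝ))) = z := hzeq
    have hzeq2' : ((↑s' : AddCircle (1:ℝ)), (↑t' : AddCircle (1:ℝ))) = z' := hzeq'
    have h2 : matTorusSMul (A : Matrix (Fin 2) (Fin 2) ℤ)
        ((↑s : AddCircle (1:ℝ)), (↑t : AddCircle (1:ℝ))) = (↑s', ↑t') := by
      rw [hzeq2, hAeq, ← hzeq2']
    obtain ⟨e1, e2⟩ := inj_core (val_mem_D4L hA) ht0 ht2 hs0 hst ht0' ht2' hs0' hst' h2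
    have e1' : s' = s := e1
    have e2' : t' = t := e2
    apply Subtype.ext
    show z = z'
    rw [← hzeq2, ← hzeq2', e1', e2']
  · -- surjective
    intro q
    induction q using Quot.ind with
    | _ v =>
      obtain ⟨z, hzT, hrel⟩ := surj_core v
      exact ⟨⟨z, hzT⟩, (Quot.sound hrel).symm⟩
end

section
/- Let G be a locally compact Hausdorff group with left Haar measure and modular function Δ, acting properly on a locally compact Hausdorff space X. Let c: X → [0,1] be a continuous cut-off function, i.e. c has compact support on every G-compact subset of X and ∫_G c(g⁻¹·x)² dg = 1 for all x ∈ X. Fix x ∈ X and define c_x: G → ℝ by c_x(g) = √(Δ(g⁻¹)) · c(g·x). Then: (a) c_x is a unit vector in L²(G) and satisfies c_x(gk) = c_x(g) for all g ∈ G and all k in the stabilizer G_x; (b) for every ξ ∈ L²(G), the function h ↦ ∫_G Δ(g⁻¹h) c_x(g⁻¹h) c_x(h) ξ(g⁻¹h) dg equals ⟨ξ, c_x⟩·c_x in L²(G); hence this integral operator is the orthogonal rank-one projection of L²(G) onto ℂ·c_x. -/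
/-! The measure `Δ(g⁻¹) dμ(g)` is right invariant, so its image under inversion is left invariant
and hence a multiple of `μ`; applying this twice shows the multiple is `1`, which gives the
inversion formula `∫ Δ(g⁻¹) f(g⁻¹) dμ(g) = ∫ f dμ`. Without regularity of `μ`, Haar measures can
only be compared on relatively compact sets, so the formula is proved for compactly supported `f`.

Properness makes the orbit of `x` closed and the orbit map proper, so the cut-off condition makes
`g ↦ c(g • x)` compactly supported. The inversion formula applied to `c(g⁻¹ • x)²` gives
`‖c_x‖ = 1`, and after a left translation by `h` it turns the integral operator into
`⟨ξ, c_x⟩ c_x(h)`. Invariance under `G_x` holds because `Δ` is trivial on the compact group `G_x`.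
-/

open MeasureTheory

open Set Function MulAction
open scoped NNReal ENNReal

section PositiveMultiplicative

variable {G : Type*} [Group G] {Δ : G → ℝ}

lemma map_one_of_map_mul_of_pos (hpos : ∀ g, 0 < Δ g) (hmul : ∀ g h, Δ (g * h) = Δ g * Δ h) :
    Δ 1 = 1 :=
  (mul_eq_left₀ (hpos 1).ne').1 (by rw [← hmul, one_mul])

lemma map_inv_mul_of_map_mul_of_pos (hpos : ∀ g, 0 < Δ g)
    (hmul : ∀ g h, Δ (g * h) = Δ g * Δ h) (g : G) : Δ g⁻¹ * Δ g = 1 := by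
  rw [← hmul, inv_mul_cancel, map_one_of_map_mul_of_pos hpos hmul]

/-- A compact subgroup has bounded image, while `Δ (k ^ n) = Δ k ^ n` is unbounded if `Δ k > 1`. -/
lemma map_eq_one_of_mem_of_isCompact [TopologicalSpace G] (hpos : ∀ g, 0 < Δ g)
    (hcont : Continuous Δ) (hmul : ∀ g h, Δ (g * h) = Δ g * Δ h) {H : Subgroup G}
    (hH : IsCompact (H : Set G)) {k : G} (hk : k ∈ H) : Δ k = 1 := by
  let χ : G →* ℝ := ⟨⟨Δ, map_one_of_map_mul_of_pos hpos hmul⟩, hmul⟩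
  obtain ⟨M, hM⟩ := (hH.image hcont).bddAbove
  have hle : ∀ k ∈ H, Δ k ≤ 1 := by
    intro k hk
    by_contra! hgt
    obtain ⟨n, hn⟩ := pow_unbounded_of_one_lt M hgt
    exact (hM ⟨k ^ n, pow_mem hk n, map_pow χ k n⟩).not_gt hn
  nlinarith [hle k hk, hle k⁻¹ (inv_mem hk), map_inv_mul_of_map_mul_of_pos hpos hmul k, hpos k,
    hpos k⁻¹]

end PositiveMultiplicative

namespace ProperAction

variable {G X : Type*} [Group G] [TopologicalSpace G] [TopologicalSpace X] [MulAction G X]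

lemma isCompact_preimage_smul_const (h : ProperAction G X) (x : X) {K : Set X}
    (hK : IsCompact K) : IsCompact ((· • x) ⁻¹' K : Set G) := by
  have : ((· • x) ⁻¹' K : Set G) =
      Prod.fst '' ((fun p : G × X => (p.1 • p.2, p.2)) ⁻¹' K ×ˢ {x}) := by
    ext g
    simp
  rw [this]
  exact (h _ (hK.prod isCompact_singleton)).image continuous_fst

lemma isCompact_stabilizer (h : ProperAction G X) (x : X) :
    IsCompact (stabilizer G x : Set G) :=
  h.isCompact_preimage_smul_const x isCompact_singleton

lemma isClosed_orbit [ContinuousSMul G X] [T2Space X] [LocallyCompactSpace X]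
    (h : ProperAction G X) (x : X) : IsClosed (orbit G x) :=
  (isProperMap_iff_isCompact_preimage.2 ⟨continuous_id.smul continuous_const,
    fun _ hK => h.isCompact_preimage_smul_const x hK⟩).isClosed_range

lemma hasCompactSupport_comp_smul_const [ContinuousSMul G X] (h : ProperAction G X) {x : X}
    {c : X → ℝ} (hc : IsCompact (closure (orbit G x ∩ support c))) :
    HasCompactSupport fun g : G => c (g • x) := by
  refine .intro' (h.isCompact_preimage_smul_const x hc)
    (isClosed_closure.preimage (continuous_id.smul continuous_const)) fun g hg => ?_
  by_contra hne
  exact hg (subset_closure ⟨mem_orbit x g, hne⟩)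

end ProperAction

lemma isCompact_image_orbit_mk {G X : Type*} [Group G] [MulAction G X] [TopologicalSpace X]
    (x : X) : IsCompact (Quotient.mk (orbitRel G X) '' orbit G x) := by
  refine Subsingleton.isCompact ?_
  rintro _ ⟨_, ⟨g, rfl⟩, rfl⟩ _ ⟨_, ⟨g', rfl⟩, rfl⟩
  exact Quotient.sound (smul_mem_orbit_smul g g' x)

lemma integral_eq_of_measure_eq_of_isCompact_closure {α E : Type*} [TopologicalSpace α]
    [MeasurableSpace α] [NormedAddCommGroup E] [NormedSpace ℝ E] {μ ν : Measure α}
    (hμν : ∀ s : Set α, IsCompact (closure s) → ν s = μ s) {f : α → E}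
    (hf : HasCompactSupport f) :
    ∫ a, f a ∂ν = ∫ a, f a ∂μ := by
  have hres : ν.restrict (tsupport f) = μ.restrict (tsupport f) := by
    ext A hA
    rw [Measure.restrict_apply hA, Measure.restrict_apply hA]
    exact hμν _ (hf.of_isClosed_subset isClosed_closure
      (closure_minimal inter_subset_right (isClosed_tsupport f)))
  have hzero : ∀ a ∉ tsupport f, f a = 0 := fun _ => image_eq_zero_of_notMem_tsupport
  rw [← setIntegral_eq_integral_of_forall_compl_eq_zero (μ := ν) hzero,
    ← setIntegral_eq_integral_of_forall_compl_eq_zero (μ := μ) hzero, hres]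

lemma integral_eq_haarScalarFactor_smul_of_hasCompactSupport {G E : Type*} [Group G]
    [TopologicalSpace G] [IsTopologicalGroup G] [LocallyCompactSpace G] [MeasurableSpace G]
    [BorelSpace G] [NormedAddCommGroup E] [NormedSpace ℝ E] (μ : Measure G) {ν : Measure G}
    [μ.IsHaarMeasure] [IsFiniteMeasureOnCompacts ν] [ν.IsMulLeftInvariant] {f : G → E}
    (hf : HasCompactSupport f) :
    ∫ g, f g ∂ν = Measure.haarScalarFactor ν μ • ∫ g, f g ∂μ := by
  rw [← integral_smul_nnreal_measure]
  exact integral_eq_of_measure_eq_of_isCompact_closure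
    (fun _ hs => Measure.measure_isMulInvariant_eq_smul_of_isCompact_closure ν μ hs) hf

section ModularFunction

variable {G : Type*} [Group G] [TopologicalSpace G] [IsTopologicalGroup G]
  [MeasurableSpace G] [BorelSpace G] (μ : Measure G) {Δ : G → ℝ}
  {E : Type*} [NormedAddCommGroup E] [NormedSpace ℝ E]

noncomputable def rightHaarOfModular (Δ : G → ℝ) : Measure G :=
  μ.withDensity fun g => ENNReal.ofReal (Δ g⁻¹)

lemma measurable_ofReal_modular_inv (hcont : Continuous Δ) :
    Measurable fun g : G => ENNReal.ofReal (Δ g⁻¹) :=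
  ENNReal.measurable_ofReal.comp (hcont.comp continuous_inv).measurable

lemma isMulRightInvariant_rightHaarOfModular (hpos : ∀ g, 0 < Δ g) (hcont : Continuous Δ)
    (hmul : ∀ g h, Δ (g * h) = Δ g * Δ h)
    (hright : ∀ s : G, Measure.map (· * s) μ = ENNReal.ofReal (Δ s⁻¹) • μ) :
    (rightHaarOfModular μ Δ).IsMulRightInvariant := by
  refine ⟨fun s => Measure.ext fun A hA => ?_⟩
  -- the density and the measure are both scaled by `Δ(s⁻¹)` under right translation by `s`
  have hdens : ∀ g, ENNReal.ofReal (Δ (g * s)⁻¹) =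
      ENNReal.ofReal (Δ s⁻¹) * ENNReal.ofReal (Δ g⁻¹) := fun g => by
    rw [mul_inv_rev, hmul, ENNReal.ofReal_mul (hpos _).le]
  have h := setLIntegral_map (μ := μ) hA (measurable_ofReal_modular_inv hcont)
    (measurable_mul_const s)
  rw [hright, Measure.restrict_smul, lintegral_smul_measure] at h
  simp_rw [hdens] at h
  rw [lintegral_const_mul _ (measurable_ofReal_modular_inv hcont)] at h
  rw [rightHaarOfModular, Measure.map_apply (measurable_mul_const s) hA,
    withDensity_apply _ (hA.preimage (measurable_mul_const s)), withDensity_apply _ hA]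
  exact ((ENNReal.mul_right_inj (ENNReal.ofReal_pos.2 (hpos _)).ne'
    ENNReal.ofReal_ne_top).1 h).symm

lemma isFiniteMeasureOnCompacts_rightHaarOfModular [IsFiniteMeasureOnCompacts μ]
    (hcont : Continuous Δ) : IsFiniteMeasureOnCompacts (rightHaarOfModular μ Δ) := by
  refine ⟨fun K hK => ?_⟩
  refine (measure_mono subset_closure).trans_lt ?_
  rw [rightHaarOfModular, withDensity_apply _ isClosed_closure.measurableSet]
  exact setLIntegral_lt_top_of_isCompact hK.closure.measure_lt_top.ne hK.closure
    (continuous_real_toNNReal.comp (hcont.comp continuous_inv))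

lemma integral_inv_rightHaarOfModular (hpos : ∀ g, 0 < Δ g) (hcont : Continuous Δ)
    (f : G → E) :
    ∫ g, f g ∂(rightHaarOfModular μ Δ).inv = ∫ g, Δ g⁻¹ • f g⁻¹ ∂μ := by
  rw [Measure.inv, measurableEmbedding_inv.integral_map, rightHaarOfModular,
    integral_withDensity_eq_integral_toReal_smul (measurable_ofReal_modular_inv hcont)
      (.of_forall fun _ => ENNReal.ofReal_lt_top)]
  simp_rw [ENNReal.toReal_ofReal (hpos _).le]

variable [LocallyCompactSpace G] [μ.IsHaarMeasure]

/-- Applying the identity to `g ↦ Δ(g⁻¹) f(g⁻¹)` returns `f`, so the scalar squares to `1`. -/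
lemma eq_one_of_integral_modular_mul_inv_eq_mul (hpos : ∀ g, 0 < Δ g)
    (hmul : ∀ g h, Δ (g * h) = Δ g * Δ h) {c : ℝ≥0}
    (hc : ∀ f : G → ℝ, HasCompactSupport f → ∫ g, Δ g⁻¹ * f g⁻¹ ∂μ = c * ∫ g, f g ∂μ) :
    c = 1 := by
  obtain ⟨f, hf, hf_nonneg, hf_one⟩ := exists_continuous_nonneg_pos (1 : G)
  have hint : 0 < ∫ g, f g ∂μ := by
    rw [integral_pos_iff_support_of_nonneg hf_nonneg
      (f.continuous.integrable_of_hasCompactSupport hf)]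
    exact f.continuous.isOpen_support.measure_pos μ ⟨1, hf_one⟩
  have hsupp : HasCompactSupport fun g => Δ g⁻¹ * f g⁻¹ :=
    (hf.comp_homeomorph (Homeomorph.inv G)).mul_left
  have htwice := hc _ hsupp
  simp only [inv_inv, ← mul_assoc, map_inv_mul_of_map_mul_of_pos hpos hmul, one_mul] at htwice
  rw [hc _ hf] at htwice
  have hsq : (c : ℝ) * c = 1 := by
    refine mul_right_cancel₀ hint.ne' ?_
    linarith
  exact NNReal.coe_eq_one.1 (by nlinarith [c.coe_nonneg])

theorem integral_modular_smul_inv (hpos : ∀ g, 0 < Δ g) (hcont : Continuous Δ)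
    (hmul : ∀ g h, Δ (g * h) = Δ g * Δ h)
    (hright : ∀ s : G, Measure.map (· * s) μ = ENNReal.ofReal (Δ s⁻¹) • μ)
    {f : G → E} (hf : HasCompactSupport f) :
    ∫ g, Δ g⁻¹ • f g⁻¹ ∂μ = ∫ g, f g ∂μ := by
  have := isMulRightInvariant_rightHaarOfModular μ hpos hcont hmul hright
  have := isFiniteMeasureOnCompacts_rightHaarOfModular μ hcont (Δ := Δ)
  have hc : Measure.haarScalarFactor (rightHaarOfModular μ Δ).inv μ = 1 :=
    eq_one_of_integral_modular_mul_inv_eq_mul μ hpos hmul fun f hf => by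
      simpa only [smul_eq_mul, NNReal.smul_def] using
        (integral_inv_rightHaarOfModular μ hpos hcont f).symm.trans
          (integral_eq_haarScalarFactor_smul_of_hasCompactSupport μ hf)
  rw [← integral_inv_rightHaarOfModular μ hpos hcont,
    integral_eq_haarScalarFactor_smul_of_hasCompactSupport μ hf, hc, one_smul]

lemma integral_modular_smul_inv_mul (hpos : ∀ g, 0 < Δ g) (hcont : Continuous Δ)
    (hmul : ∀ g h, Δ (g * h) = Δ g * Δ h)
    (hright : ∀ s : G, Measure.map (· * s) μ = ENNReal.ofReal (Δ s⁻¹) • μ)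
    {f : G → E} (hf : HasCompactSupport f) (h : G) :
    ∫ g, Δ (g⁻¹ * h) • f (g⁻¹ * h) ∂μ = ∫ g, f g ∂μ := by
  rw [← integral_mul_left_eq_self _ h]
  simp only [mul_inv_rev, mul_assoc, inv_mul_cancel, mul_one]
  exact integral_modular_smul_inv μ hpos hcont hmul hright hf

end ModularFunction

theorem cutoff_gives_rank_one_projection_general
    (G : Type*) [Group G] [TopologicalSpace G] [IsTopologicalGroup G]
    [LocallyCompactSpace G]
    [MeasurableSpace G] [BorelSpace G]
    (μ : Measure G) [μ.IsHaarMeasure]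
    (Δ : G → ℝ) (hΔpos : ∀ g, 0 < Δ g) (hΔcont : Continuous Δ)
    (hΔmul : ∀ g h : G, Δ (g * h) = Δ g * Δ h)
    (hΔright : ∀ s : G,
      Measure.map (fun g : G => g * s) μ = ENNReal.ofReal (Δ s⁻¹) • μ)
    (X : Type*) [TopologicalSpace X] [LocallyCompactSpace X] [T2Space X]
    [MulAction G X] [ContinuousSMul G X] (hproper : ProperAction G X)
    (c : X → ℝ) (hc_cont : Continuous c)
    (hc_supp : ∀ Y : Set X, IsClosed Y →
      (∀ (g : G) (y : X), y ∈ Y → g • y ∈ Y) →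
      IsCompact (Quotient.mk (MulAction.orbitRel G X) '' Y) →
      IsCompact (closure (Y ∩ Function.support c)))
    (hc_int : ∀ y : X, ∫ g : G, (c (g⁻¹ • y)) ^ 2 ∂μ = 1)
    (x : X) :
    (MemLp (fun g : G => Real.sqrt (Δ g⁻¹) * c (g • x)) 2 μ) ∧
    (∫ g : G, (Real.sqrt (Δ g⁻¹) * c (g • x)) ^ 2 ∂μ = 1) ∧
    (∀ g : G, ∀ k ∈ MulAction.stabilizer G x,
      Real.sqrt (Δ (g * k)⁻¹) * c ((g * k) • x)
        = Real.sqrt (Δ g⁻¹) * c (g • x)) ∧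
    (∀ ξ : G → ℂ, MemLp ξ 2 μ → ∀ h : G,
      (∫ g : G,
          ((Δ (g⁻¹ * h) * (Real.sqrt (Δ (g⁻¹ * h)⁻¹) * c ((g⁻¹ * h) • x))
              * (Real.sqrt (Δ h⁻¹) * c (h • x)) : ℝ) : ℂ) * ξ (g⁻¹ * h) ∂μ)
        = (∫ g : G, ξ g * ((Real.sqrt (Δ g⁻¹) * c (g • x) : ℝ) : ℂ) ∂μ)
            * ((Real.sqrt (Δ h⁻¹) * c (h • x) : ℝ) : ℂ)) := by
  have hc_cpt : HasCompactSupport fun g : G => c (g • x) :=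
    hproper.hasCompactSupport_comp_smul_const <| hc_supp _ (hproper.isClosed_orbit x)
      (fun g _ => mem_orbit_of_mem_orbit g) (isCompact_image_orbit_mk x)
  have hcx_cpt : HasCompactSupport fun g : G => Real.sqrt (Δ g⁻¹) * c (g • x) :=
    hc_cpt.mul_left
  have hcx_cont : Continuous fun g : G => Real.sqrt (Δ g⁻¹) * c (g • x) := by fun_prop
  refine ⟨hcx_cont.memLp_of_hasCompactSupport hcx_cpt, ?_, fun g k hk => ?_, fun ξ _ h => ?_⟩
  · calc ∫ g : G, (Real.sqrt (Δ g⁻¹) * c (g • x)) ^ 2 ∂μ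
        = ∫ g : G, Δ g⁻¹ • c (g⁻¹⁻¹ • x) ^ 2 ∂μ := by
          simp only [mul_pow, Real.sq_sqrt (hΔpos _).le, inv_inv, smul_eq_mul]
      _ = ∫ g : G, c (g⁻¹ • x) ^ 2 ∂μ :=
          integral_modular_smul_inv μ hΔpos hΔcont hΔmul hΔright
            ((hc_cpt.comp_homeomorph (Homeomorph.inv G)).comp_left (g := (· ^ 2))
              (zero_pow two_ne_zero))
      _ = 1 := hc_int x
  · have hΔk : Δ k⁻¹ = 1 := map_eq_one_of_mem_of_isCompact hΔpos hΔcont hΔmul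
      (hproper.isCompact_stabilizer x) (inv_mem hk)
    rw [mul_inv_rev, hΔmul, hΔk, one_mul, mul_smul, mem_stabilizer_iff.1 hk]
  · have hsupp :
        HasCompactSupport fun g : G => ((Real.sqrt (Δ g⁻¹) * c (g • x) : ℝ) : ℂ) * ξ g :=
      (hcx_cpt.comp_left Complex.ofReal_zero).mul_right
    calc _ = ((Real.sqrt (Δ h⁻¹) * c (h • x) : ℝ) : ℂ) * ∫ g : G, Δ (g⁻¹ * h) •
          (((Real.sqrt (Δ (g⁻¹ * h)⁻¹) * c ((g⁻¹ * h) • x) : ℝ) : ℂ) * ξ (g⁻¹ * h)) ∂μ := by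
          rw [← integral_const_mul]
          congr 1 with g
          rw [Complex.real_smul]
          push_cast
          ring
      _ = _ := by
          rw [integral_modular_smul_inv_mul μ hΔpos hΔcont hΔmul hΔright hsupp, mul_comm]
          simp_rw [mul_comm (ξ _)]

/-- Let `G` be a locally compact Hausdorff group with a left Haar measure `μ`
and modular function `Δ` (so that right translation by `s` scales `μ` by
`Δ(s)`, i.e. `map (· * s) μ = Δ(s⁻¹) • μ`), acting properly on a locally
compact Hausdorff space `X`.  Let `c : X → [0,1]` be a continuous cut-off
function:  `c` has compact support on every `G`-compact subset of `X` and
`∫_G c(g⁻¹ • x)² dg = 1` for all `x ∈ X`.  Fix `x ∈ X` and define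
`c_x : G → ℝ` by `c_x(g) = √(Δ(g⁻¹)) · c(g • x)`.  Then:
(a) `c_x` is a unit vector in `L²(G)` satisfying `c_x(gk) = c_x(g)` for all
`g ∈ G` and all `k` in the stabilizer `G_x`;
(b) for every `ξ ∈ L²(G)` and every `h ∈ G`,
`∫_G Δ(g⁻¹h) c_x(g⁻¹h) c_x(h) ξ(g⁻¹h) dg = ⟨ξ, c_x⟩ · c_x(h)`;
hence this integral operator is the orthogonal rank-one projection of
`L²(G)` onto `ℂ · c_x`. -/
theorem cutoff_gives_rank_one_projection
    (G : Type*) [Group G] [TopologicalSpace G] [IsTopologicalGroup G]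
    [LocallyCompactSpace G] [T2Space G]
    [MeasurableSpace G] [BorelSpace G]
    (μ : Measure G) [μ.IsHaarMeasure]
    (Δ : G → ℝ) (hΔpos : ∀ g, 0 < Δ g) (hΔcont : Continuous Δ)
    (hΔmul : ∀ g h : G, Δ (g * h) = Δ g * Δ h)
    (hΔright : ∀ s : G,
      Measure.map (fun g : G => g * s) μ = ENNReal.ofReal (Δ s⁻¹) • μ)
    (X : Type*) [TopologicalSpace X] [LocallyCompactSpace X] [T2Space X]
    [MulAction G X] [ContinuousSMul G X] (hproper : ProperAction G X)
    (c : X → ℝ) (hc_cont : Continuous c)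
    (hc_mem : ∀ y : X, c y ∈ Set.Icc (0 : ℝ) 1)
    (hc_supp : ∀ Y : Set X, IsClosed Y →
      (∀ (g : G) (y : X), y ∈ Y → g • y ∈ Y) →
      IsCompact (Quotient.mk (MulAction.orbitRel G X) '' Y) →
      IsCompact (closure (Y ∩ Function.support c)))
    (hc_int : ∀ y : X, ∫ g : G, (c (g⁻¹ • y)) ^ 2 ∂μ = 1)
    (x : X) :
    (MemLp (fun g : G => Real.sqrt (Δ g⁻¹) * c (g • x)) 2 μ) ∧
    (∫ g : G, (Real.sqrt (Δ g⁻¹) * c (g • x)) ^ 2 ∂μ = 1) ∧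
    (∀ g : G, ∀ k ∈ MulAction.stabilizer G x,
      Real.sqrt (Δ (g * k)⁻¹) * c ((g * k) • x)
        = Real.sqrt (Δ g⁻¹) * c (g • x)) ∧
    (∀ ξ : G → ℂ, MemLp ξ 2 μ → ∀ h : G,
      (∫ g : G,
          ((Δ (g⁻¹ * h) * (Real.sqrt (Δ (g⁻¹ * h)⁻¹) * c ((g⁻¹ * h) • x))
              * (Real.sqrt (Δ h⁻¹) * c (h • x)) : ℝ) : ℂ) * ξ (g⁻¹ * h) ∂μ)
        = (∫ g : G, ξ g * ((Real.sqrt (Δ g⁻¹) * c (g • x) : ℝ) : ℂ) ∂μ)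
            * ((Real.sqrt (Δ h⁻¹) * c (h • x) : ℝ) : ℂ)) :=
  cutoff_gives_rank_one_projection_general G μ Δ hΔpos hΔcont hΔmul hΔright X hproper c hc_cont
    hc_supp hc_int x
end

section
/- Let G be a locally compact Hausdorff group acting properly on a locally compact Hausdorff space X, and suppose the action satisfies Palais's slice property (SP). For x ∈ X set S_x := {y ∈ X : G_y ⊆ G_x}, and call a subset of the form W·(S_x ∩ U) an almost slice at x, where W is an open neighborhood of the identity in G and U is an open neighborhood of x in X. Then every almost slice at x is open in X, and the almost slices at x form a neighborhood base at x. -/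
/-!
Write a point of `W • (S_x ∩ U)` as `g • y` and take a slice map `φ : U_y → G ⧸ G_y` at `y`.
Every point of the slice `Y = φ⁻¹(e G_y)` has stabilizer inside `G_y ⊆ G_x`, so `Y ⊆ S_x`, and
equivariance gives `W' • Y = φ⁻¹(W' G_y)`, which is open for open `W'` since `G → G ⧸ G_y` is
open. For `W' ∋ g` small inside `W` and `N ∋ g • y` with `W'⁻¹ • N ⊆ U`, the open set
`N ∩ W' • Y` lies in `W • (S_x ∩ U)`. The neighbourhood base part is just continuity of the
action at `(1, x)`, since `W • (S_x ∩ U) ⊆ W • U`.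
-/

open Pointwise

/-- Palais's slice property (SP): every point `x` has a `G`-invariant open
neighborhood `U` admitting a `G_x`-slice through `x`. -/
def SliceProperty (G X : Type*) [Group G] [TopologicalSpace G]
    [TopologicalSpace X] [MulAction G X] : Prop :=
  ∀ x : X, ∃ U : Set X, ∃ hxU : x ∈ U, IsOpen U ∧
    ∃ hUinv : ∀ (g : G) (y : X), y ∈ U → g • y ∈ U,
    ∃ φ : U → G ⧸ MulAction.stabilizer G x,
      Continuous φ ∧
      (∀ (g : G) (y : X) (hy : y ∈ U),
        φ ⟨g • y, hUinv g y hy⟩ = g • φ ⟨y, hy⟩) ∧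
      φ ⟨x, hxU⟩ = (QuotientGroup.mk (1 : G) : G ⧸ MulAction.stabilizer G x)

/-- `S_x = {y : G_y ⊆ G_x}`. -/
def bigSlice (G : Type*) [Group G] {X : Type*} [MulAction G X] (x : X) : Set X :=
  {y : X | MulAction.stabilizer G y ≤ MulAction.stabilizer G x}

section Slice

variable {G X : Type*} [Group G] [MulAction G X] {H : Subgroup G} {U : Set X}

def slice (φ : U → G ⧸ H) : Set X :=
  Subtype.val '' (φ ⁻¹' {((1 : G) : G ⧸ H)})

variable {hU : ∀ (g : G) (y : X), y ∈ U → g • y ∈ U} {φ : U → G ⧸ H}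

theorem stabilizer_le_of_mem_slice
    (hφ : ∀ (g : G) (y : X) (hy : y ∈ U), φ ⟨g • y, hU g y hy⟩ = g • φ ⟨y, hy⟩)
    {y : X} (hy : y ∈ slice φ) : MulAction.stabilizer G y ≤ H := by
  obtain ⟨⟨y, hyU⟩, hy1, rfl⟩ := hy
  rw [Set.mem_preimage, Set.mem_singleton_iff] at hy1
  intro h hh
  have hφh : φ ⟨h • y, hU h y hyU⟩ = ((1 : G) : G ⧸ H) := by
    simpa only [show h • y = y from hh] using hy1
  rw [hφ h y hyU, hy1, MulAction.Quotient.smul_coe, smul_eq_mul,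
    mul_one] at hφh
  simpa using QuotientGroup.eq.mp hφh

theorem smul_slice_eq
    (hφ : ∀ (g : G) (y : X) (hy : y ∈ U), φ ⟨g • y, hU g y hy⟩ = g • φ ⟨y, hy⟩)
    (W : Set G) : W • slice φ = Subtype.val '' (φ ⁻¹' ((↑) '' W)) := by
  ext z
  constructor
  · rintro ⟨g, hg, _, ⟨⟨y, hy⟩, hy1, rfl⟩, rfl⟩
    refine ⟨⟨g • y, hU g y hy⟩, ⟨g, hg, ?_⟩, rfl⟩
    rw [hφ g y hy, show φ ⟨y, hy⟩ = _ from hy1, MulAction.Quotient.smul_coe, smul_eq_mul, mul_one]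
  · rintro ⟨⟨z, hz⟩, ⟨g, hg, hφz⟩, rfl⟩
    refine ⟨g, hg, g⁻¹ • z, ⟨⟨g⁻¹ • z, hU _ _ hz⟩, ?_, rfl⟩, smul_inv_smul g z⟩
    rw [Set.mem_preimage, hφ _ _ hz, ← hφz, MulAction.Quotient.smul_coe, smul_eq_mul,
      inv_mul_cancel, Set.mem_singleton_iff]

theorem isOpen_smul_slice [TopologicalSpace G] [IsTopologicalGroup G] [TopologicalSpace X]
    (hφ : ∀ (g : G) (y : X) (hy : y ∈ U), φ ⟨g • y, hU g y hy⟩ = g • φ ⟨y, hy⟩)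
    (hUo : IsOpen U) (hφc : Continuous φ) {W : Set G} (hW : IsOpen W) : IsOpen (W • slice φ) := by
  rw [smul_slice_eq hφ]
  exact hUo.isOpenMap_subtype_val _ (hφc.isOpen_preimage _ (QuotientGroup.isOpenMap_coe W hW))

end Slice

section AlmostSlice

variable {G X : Type*} [Group G] [TopologicalSpace G] [TopologicalSpace X] [MulAction G X]

theorem isOpen_smul_bigSlice_inter [IsTopologicalGroup G] [ContinuousSMul G X]
    (hSP : SliceProperty G X) (x : X) {W : Set G} {U : Set X} (hW : IsOpen W) (hU : IsOpen U) :
    IsOpen (W • (bigSlice G x ∩ U)) := by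
  refine isOpen_iff_mem_nhds.mpr ?_
  rintro _ ⟨g, hg, y, ⟨hyS, hyU⟩, rfl⟩
  obtain ⟨Uy, hyUy, hUyo, _, φ, hφc, hφ, hφy⟩ := hSP y
  have hbox : {p : G × X | p.1⁻¹ • p.2 ∈ U} ∈ nhds (g, g • y) :=
    (hU.preimage (by fun_prop)).mem_nhds (by simpa using hyU)
  obtain ⟨W₁, N, hW₁, hg₁, hN, hgy, hW₁N⟩ := mem_nhds_prod_iff'.mp hbox
  have hy : y ∈ slice φ := ⟨⟨y, hyUy⟩, hφy, rfl⟩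
  have hnhds : N ∩ (W ∩ W₁) • slice φ ∈ nhds (g • y) :=
    (hN.inter (isOpen_smul_slice hφ hUyo hφc (hW.inter hW₁))).mem_nhds
      ⟨hgy, Set.smul_mem_smul ⟨hg, hg₁⟩ hy⟩
  refine Filter.mem_of_superset hnhds ?_
  rintro _ ⟨hN', g', ⟨hg', hg₁'⟩, _, ⟨⟨y', hy'⟩, hy'1, rfl⟩, rfl⟩
  have hy'U : y' ∈ U := by simpa using hW₁N (Set.mk_mem_prod hg₁' hN')
  exact Set.smul_mem_smul hg'
    ⟨(stabilizer_le_of_mem_slice hφ ⟨⟨y', hy'⟩, hy'1, rfl⟩).trans hyS, hy'U⟩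

theorem exists_open_smul_subset_of_mem_nhds [ContinuousSMul G X] {x : X} {V : Set X}
    (hV : V ∈ nhds x) :
    ∃ (W : Set G) (U : Set X), IsOpen W ∧ (1 : G) ∈ W ∧ IsOpen U ∧ x ∈ U ∧ W • U ⊆ V := by
  have hsmul : (fun p : G × X => p.1 • p.2) ⁻¹' V ∈ nhds ((1 : G), x) :=
    continuous_smul.continuousAt (by simpa using hV)
  obtain ⟨W, U, hW, hW1, hU, hxU, hWU⟩ := mem_nhds_prod_iff'.mp hsmul
  exact ⟨W, U, hW, hW1, hU, hxU,
    Set.smul_subset_iff.mpr fun g hg y hy => hWU (Set.mk_mem_prod hg hy)⟩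

end AlmostSlice

theorem almostSlices_form_open_neighborhood_base_general
    (G : Type*) [Group G] [TopologicalSpace G] [IsTopologicalGroup G]
    (X : Type*) [TopologicalSpace X]
    [MulAction G X] [ContinuousSMul G X]
    (hSP : SliceProperty G X) (x : X) :
    (∀ (W : Set G) (U : Set X), IsOpen W → (1 : G) ∈ W → IsOpen U → x ∈ U →
       IsOpen (W • (bigSlice G x ∩ U))) ∧
    (∀ V ∈ nhds x, ∃ (W : Set G) (U : Set X),
       IsOpen W ∧ (1 : G) ∈ W ∧ IsOpen U ∧ x ∈ U ∧
       W • (bigSlice G x ∩ U) ⊆ V) := by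
  refine ⟨fun W U hW _ hU _ => isOpen_smul_bigSlice_inter hSP x hW hU, fun V hV => ?_⟩
  obtain ⟨W, U, hW, hW1, hU, hxU, hWU⟩ := exists_open_smul_subset_of_mem_nhds (G := G) hV
  exact ⟨W, U, hW, hW1, hU, hxU,
    (Set.smul_subset_smul_left Set.inter_subset_right).trans hWU⟩

/-- Let `G` be a locally compact Hausdorff group acting properly on the locally
compact Hausdorff space `X`, satisfying Palais's slice property (SP).  An
*almost slice* at `x` is a set `W • (S_x ∩ U)` with `W` an open neighborhood
of the identity in `G` and `U` an open neighborhood of `x` in `X`, where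
`S_x = {y : G_y ⊆ G_x}`.  Then every almost slice at `x` is open in `X`, and
the almost slices at `x` form a neighborhood base at `x`. -/
theorem almostSlices_form_open_neighborhood_base
    (G : Type*) [Group G] [TopologicalSpace G] [IsTopologicalGroup G]
    [LocallyCompactSpace G] [T2Space G]
    (X : Type*) [TopologicalSpace X] [LocallyCompactSpace X] [T2Space X]
    [MulAction G X] [ContinuousSMul G X]
    (hproper : ProperAction G X) (hSP : SliceProperty G X) (x : X) :
    (∀ (W : Set G) (U : Set X), IsOpen W → (1 : G) ∈ W → IsOpen U → x ∈ U →
       IsOpen (W • (bigSlice G x ∩ U))) ∧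
    (∀ V ∈ nhds x, ∃ (W : Set G) (U : Set X),
       IsOpen W ∧ (1 : G) ∈ W ∧ IsOpen U ∧ x ∈ U ∧
       W • (bigSlice G x ∩ U) ⊆ V) :=
  almostSlices_form_open_neighborhood_base_general G X hSP x
end

section
/- Let G = ∏_{n∈ℕ} ℤ/2 with the product topology, acting on X = ∏_{n∈ℕ} 𝕋 coordinatewise, where each factor ℤ/2 is realized as {±1} ⊂ 𝕋 acting on 𝕋 by multiplication. Let x = (1,1,1,…) ∈ X. If L is a closed subgroup of G, U is a G-invariant open neighborhood of x in X, and φ: U → G/L is a continuous G-equivariant map, then L has finite index in G (equivalently, G/L is finite). -/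
/-- `-1` as an element of the circle group `𝕋 ⊂ ℂ`. -/
noncomputable def negOneCircle : Circle := ⟨-1, by simp [Submonoid.unitSphere]⟩

lemma negOne_mul_negOne : negOneCircle * negOneCircle = 1 := by
  ext
  simp only [Circle.coe_mul, Circle.coe_one]
  show (-1 : ℂ) * -1 = 1
  norm_num

/-- The embedding `ℤ/2 = {±1} ⊂ 𝕋`. -/
noncomputable def chi (a : Multiplicative (ZMod 2)) : Circle :=
  if a = 1 then 1 else negOneCircle

lemma chi_one : chi 1 = 1 := by simp [chi]

lemma chi_mul (a b : Multiplicative (ZMod 2)) : chi (a * b) = chi a * chi b := by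
  have key : ∀ c : Multiplicative (ZMod 2), c = 1 ∨ c = Multiplicative.ofAdd 1 := by
    decide
  have h2 : (Multiplicative.ofAdd (1 : ZMod 2)) * Multiplicative.ofAdd 1 = 1 := by
    decide
  have hne : (Multiplicative.ofAdd (1 : ZMod 2)) ≠ 1 := by decide
  rcases key a with ha | ha <;> rcases key b with hb | hb <;>
    subst ha <;> subst hb <;>
    simp [chi, hne, h2, negOne_mul_negOne]

/-- The coordinatewise translation action of `G = ∏_{n ∈ ℕ} ℤ/2` on
`X = ∏_{n ∈ ℕ} 𝕋`, each factor `ℤ/2` being realized as `{±1} ⊂ 𝕋` acting on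
`𝕋` by multiplication. -/
noncomputable instance prodTranslationAction :
    MulAction (ℕ → Multiplicative (ZMod 2)) (ℕ → Circle) where
  smul g x := fun n => chi (g n) * x n
  one_smul x := by
    funext n
    show chi 1 * x n = x n
    rw [chi_one, one_mul]
  mul_smul g h x := by
    funext n
    show chi (g n * h n) * x n = chi (g n) * (chi (h n) * x n)
    rw [chi_mul, mul_assoc]

/-!
`U` contains a basic neighbourhood of `x` that constrains only finitely many coordinates `I`.
If `g` is trivial on `I`, rotating the other coordinates from `1` to `-1` gives a path from `x`
to `g • x` inside `U`, which `φ` carries to a path from `φ x` to `g • φ x` in `G ⧸ L`. Since `G`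
is profinite and `L` is closed, `G ⧸ L` is totally disconnected, so `g` fixes `φ x`, i.e. `g ∈ L`
as `G` is abelian. Hence `L` contains an open subgroup, so it is open and of finite index in the
compact group `G`.
-/

lemma Circle.exp_pi : Circle.exp Real.pi = negOneCircle := by
  ext
  simp [negOneCircle, Circle.coe_exp, Complex.exp_pi_mul_I]

theorem QuotientGroup.totallyDisconnectedSpace_of_isClosed {G : Type*} [Group G]
    [TopologicalSpace G] [IsTopologicalGroup G] [CompactSpace G] [TotallyDisconnectedSpace G]
    {L : Subgroup G} (hL : IsClosed (L : Set G)) : TotallyDisconnectedSpace (G ⧸ L) := by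
  refine ⟨fun S _ hS => ?_⟩
  rintro a ha b hb
  obtain ⟨x, rfl⟩ := QuotientGroup.mk_surjective a
  obtain ⟨y, rfl⟩ := QuotientGroup.mk_surjective b
  -- `L` is the intersection of the open subgroups `N ≥ L`, and each `G ⧸ N` is discrete
  suffices x⁻¹ * y ∈ (⟨L, hL⟩ : ClosedSubgroup G).toSubgroup from QuotientGroup.eq.mpr this
  rw [ProfiniteGrp.closedSubgroup_eq_sInf_open, Subgroup.mem_sInf]
  rintro N ⟨hN, hLN⟩
  have : DiscreteTopology (G ⧸ N) := QuotientGroup.discreteTopology hN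
  have hmap : Continuous (Subgroup.quotientMapOfLE hLN) :=
    (QuotientGroup.isQuotientMap_mk L).continuous_iff.mpr QuotientGroup.continuous_mk
  exact QuotientGroup.eq.mp ((hS.image _ hmap.continuousOn).subsingleton
    ⟨_, ha, rfl⟩ ⟨_, hb, rfl⟩)

lemma QuotientGroup.mem_of_smul_eq_self {G : Type*} [CommGroup G] {L : Subgroup G} {g : G}
    {q : G ⧸ L} (h : g • q = q) : g ∈ L := by
  obtain ⟨x, rfl⟩ := QuotientGroup.mk_surjective q
  simpa [mul_comm g x] using QuotientGroup.eq.mp h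

/-- Rotating the coordinates where `g ≠ 1` by `exp (π i t)` joins `1` to `g • 1`. -/
lemma exists_path_one_smul_one (g : ℕ → Multiplicative (ZMod 2)) :
    ∃ γ : ℝ → ℕ → Circle, Continuous γ ∧ γ 0 = 1 ∧ γ 1 = g • 1 ∧
      ∀ t n, g n = 1 → γ t n = 1 := by
  classical
  refine ⟨fun t n => if g n = 1 then 1 else Circle.exp (Real.pi * t), ?_, ?_, ?_, ?_⟩
  · refine continuous_pi fun n => ?_
    split_ifs
    · exact continuous_const
    · exact Circle.exp.continuous.comp (continuous_const.mul continuous_id)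
  · funext n
    simp
  · funext n
    change _ = chi (g n) * 1
    simp [chi, Circle.exp_pi]
  · intro t n hn
    simp [hn]

/-- Let `G = ∏_{n ∈ ℕ} ℤ/2` with the product topology act on
`X = ∏_{n ∈ ℕ} 𝕋` coordinatewise, each factor `ℤ/2` realized as `{±1} ⊂ 𝕋`
acting by multiplication, and let `x = (1, 1, 1, …) ∈ X`.  If `L` is a closed
subgroup of `G`, `U` is a `G`-invariant open neighborhood of `x` in `X`, and
`φ : U → G/L` is a continuous `G`-equivariant map, then `L` has finite index
in `G` (equivalently, `G/L` is finite). -/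
theorem slice_subgroup_of_finite_index
    (L : Subgroup (ℕ → Multiplicative (ZMod 2)))
    (hL : IsClosed (L : Set (ℕ → Multiplicative (ZMod 2))))
    (U : Set (ℕ → Circle)) (hUopen : IsOpen U)
    (hxU : (fun _ => (1 : Circle)) ∈ U)
    (hUinv : ∀ (g : ℕ → Multiplicative (ZMod 2)) (y : ℕ → Circle),
      y ∈ U → g • y ∈ U)
    (φ : U → (ℕ → Multiplicative (ZMod 2)) ⧸ L) (hφc : Continuous φ)
    (hφeq : ∀ (g : ℕ → Multiplicative (ZMod 2)) (y : ℕ → Circle) (hy : y ∈ U),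
      φ ⟨g • y, hUinv g y hy⟩ = g • φ ⟨y, hy⟩) :
    Finite ((ℕ → Multiplicative (ZMod 2)) ⧸ L) := by
  have := QuotientGroup.totallyDisconnectedSpace_of_isClosed hL
  obtain ⟨I, u, hu, hIU⟩ := isOpen_pi_iff.mp hUopen _ hxU
  have hI : IsOpen ((I : Set ℕ).pi fun _ => {1} : Set (ℕ → Multiplicative (ZMod 2))) :=
    isOpen_set_pi I.finite_toSet fun _ _ => isOpen_discrete _
  refine L.quotient_finite_of_isOpen (L.isOpen_of_mem_nhds (g := 1) ?_)
  refine Filter.mem_of_superset (hI.mem_nhds fun _ _ => rfl) fun g hg => ?_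
  obtain ⟨γ, hγc, hγ0, hγ1, hγI⟩ := exists_path_one_smul_one g
  have hγU : ∀ t, γ t ∈ U := fun t => hIU fun n hn => hγI t n (hg n hn) ▸ (hu n hn).2
  have hconst := (isPreconnected_range (hφc.comp (hγc.subtype_mk hγU))).subsingleton
    ⟨0, rfl⟩ ⟨1, rfl⟩
  simp only [Function.comp_apply, hγ0, hγ1] at hconst
  exact QuotientGroup.mem_of_smul_eq_self (hconst.trans (hφeq g 1 hxU)).symm
end

section
/- Let G be a finite group acting on a finite set X. Then the sum, over all conjugacy classes [g] of G with g ≠ e, of the number of orbits of the centralizer Z_g = {h ∈ G : hg = gh} acting on the fixed-point set X^g = {x ∈ X : g·x = x}, equals the sum, over all G-orbits O of X, of (the number of conjugacy classes of the stabilizer G_x of any point x ∈ O) minus 1. -/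
/-- The setoid on the fixed-point set `X^g` whose classes are the orbits of the
centralizer `Z_g = {h : h * g = g * h}` acting on `X^g`. -/
def centralizerOrbitSetoid (G : Type*) [Group G] (X : Type*) [MulAction G X]
    (g : G) : Setoid {x : X // g • x = x} where
  r x y := ∃ h : G, h * g = g * h ∧ h • (x : X) = (y : X)
  iseqv := by
    constructor
    · intro x
      exact ⟨1, by simp, by simp⟩
    · rintro x y ⟨h, hc, hxy⟩
      refine ⟨h⁻¹, ?_, ?_⟩
      · calc h⁻¹ * g = h⁻¹ * g * (h * h⁻¹) := by simp
          _ = h⁻¹ * (g * h) * h⁻¹ := by group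
          _ = h⁻¹ * (h * g) * h⁻¹ := by rw [hc]
          _ = g * h⁻¹ := by group
      · rw [← hxy]; simp
    · rintro x y z ⟨h, hc, hxy⟩ ⟨k, kc, kyz⟩
      refine ⟨k * h, ?_, ?_⟩
      · calc k * h * g = k * (h * g) := by group
          _ = k * (g * h) := by rw [hc]
          _ = k * g * h := by group
          _ = g * k * h := by rw [kc]
          _ = g * (k * h) := by group
      · rw [mul_smul, hxy, kyz]

/-- The number of orbits of the centralizer `Z_g` acting on the fixed-point
set `X^g`. -/
noncomputable def centralizerOrbitCount (G : Type*) [Group G] (X : Type*)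
    [MulAction G X] (g : G) : ℕ :=
  Nat.card (Quotient (centralizerOrbitSetoid G X g))

open Classical

section FP
variable (G : Type*) [Group G] (X : Type*) [MulAction G X]

/-- Pairs (g, x) with g • x = x -/
abbrev FixPair := {p : G × X // p.1 • p.2 = p.2}

variable {G X}

instance : SMul G (FixPair G X) :=
  ⟨fun h p => ⟨(h * p.1.1 * h⁻¹, h • p.1.2), by
    have hp := p.2
    simp only [mul_smul]
    rw [inv_smul_smul, hp]⟩⟩

theorem FixPair.smul_def (h : G) (p : FixPair G X) :
    (h • p).1 = (h * p.1.1 * h⁻¹, h • p.1.2) := rfl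

instance : MulAction G (FixPair G X) where
  one_smul p := by
    apply Subtype.ext
    rw [FixPair.smul_def]
    simp
  mul_smul a b p := by
    apply Subtype.ext
    rw [FixPair.smul_def, FixPair.smul_def, FixPair.smul_def]
    simp [mul_assoc, mul_smul]

theorem orbit_mk_eq {G : Type*} [Group G] {Y : Type*} [MulAction G Y] {a b : Y} (h : G)
    (hk : h • a = b) : (Quotient.mk (MulAction.orbitRel G Y) a) = Quotient.mk _ b :=
  Quotient.sound (MulAction.mem_orbit_iff.2 ⟨h⁻¹, by rw [← hk, inv_smul_smul]⟩)

end FP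

section Maps
variable (G : Type*) [Group G] (X : Type*) [MulAction G X]

/-- class of g -/
def pi1 : Quotient (MulAction.orbitRel G (FixPair G X)) → ConjClasses G :=
  Quotient.lift (fun p => ConjClasses.mk p.1.1) (by
    rintro p q ⟨h, rfl⟩
    show ConjClasses.mk (h • q).1.1 = _
    rw [FixPair.smul_def]
    exact ConjClasses.mk_eq_mk_iff_isConj.2 (isConj_iff.2 ⟨h⁻¹, by group⟩))

/-- orbit of x -/
def pi2 : Quotient (MulAction.orbitRel G (FixPair G X)) →
    Quotient (MulAction.orbitRel G X) :=
  Quotient.lift (fun p => Quotient.mk _ p.1.2) (by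
    rintro p q ⟨h, rfl⟩
    show Quotient.mk _ (h • q).1.2 = _
    rw [FixPair.smul_def]
    exact Quotient.sound ⟨h, rfl⟩)

/-- fiber of pi1 over mk g ≃ Z_g-orbits of X^g -/
noncomputable def fiber1Equiv (g : G) :
    {q : Quotient (MulAction.orbitRel G (FixPair G X)) // pi1 G X q = ConjClasses.mk g} ≃
      Quotient (centralizerOrbitSetoid G X g) := by
  refine (Equiv.ofBijective (Quotient.lift (fun x : {x : X // g • x = x} =>
      (⟨Quotient.mk _ (⟨(g, x.1), x.2⟩ : FixPair G X), rfl⟩ :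
        {q : Quotient (MulAction.orbitRel G (FixPair G X)) //
          pi1 G X q = ConjClasses.mk g})) ?_) ?_).symm
  · rintro x y ⟨h, hc, hxy⟩
    apply Subtype.ext
    have hgg : h * g * h⁻¹ = g := by rw [hc]; group
    have key : h • (⟨(g, x.1), x.2⟩ : FixPair G X) = ⟨(g, y.1), y.2⟩ := by
      apply Subtype.ext
      rw [FixPair.smul_def, hgg, hxy]
    exact orbit_mk_eq h key
  · constructor
    · rintro ⟨x⟩ ⟨y⟩ hxy
      obtain ⟨h, hh⟩ := Quotient.exact (Subtype.ext_iff.1 hxy)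
      simp only at hh
      have hv := congrArg Subtype.val hh
      rw [FixPair.smul_def] at hv
      obtain ⟨h1, h2⟩ := Prod.ext_iff.1 hv
      simp only at h1 h2
      rw [mul_inv_eq_iff_eq_mul] at h1
      exact (Quotient.sound (⟨h, h1, h2⟩ : (centralizerOrbitSetoid G X g).r y x)).symm
    · rintro ⟨q, hq⟩
      obtain ⟨p, rfl⟩ := Quotient.exists_rep q
      obtain ⟨⟨g', x'⟩, hfix⟩ := p
      have hq' : ConjClasses.mk g' = ConjClasses.mk g := hq
      obtain ⟨h, hh⟩ := isConj_iff.1 (ConjClasses.mk_eq_mk_iff_isConj.1 hq'.symm)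
      have hg : g = h⁻¹ * g' * h := by rw [← hh]; group
      have hfix' : g' • x' = x' := hfix
      have hfy : g • (h⁻¹ • x') = h⁻¹ • x' := by
        rw [hg, mul_smul, mul_smul, smul_inv_smul, hfix']
      refine ⟨Quotient.mk _ (⟨h⁻¹ • x', hfy⟩ : {x : X // g • x = x}), ?_⟩
      apply Subtype.ext
      show Quotient.mk _ (⟨(g, h⁻¹ • x'), hfy⟩ : FixPair G X) = Quotient.mk _ _
      have key : h⁻¹ • (⟨(g', x'), hfix⟩ : FixPair G X) = ⟨(g, h⁻¹ • x'), hfy⟩ := by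
        apply Subtype.ext
        rw [FixPair.smul_def]
        have : h⁻¹ * g' * h⁻¹⁻¹ = g := by rw [inv_inv, ← hg]
        rw [this]
      exact (orbit_mk_eq h⁻¹ key).symm

/-- fiber of pi2 over orbit of x ≃ conj classes of stabilizer -/
noncomputable def fiber2Equiv (x : X) :
    {q : Quotient (MulAction.orbitRel G (FixPair G X)) // pi2 G X q = Quotient.mk _ x} ≃
      ConjClasses (MulAction.stabilizer G x) := by
  refine (Equiv.ofBijective (Quotient.lift
      (fun s : MulAction.stabilizer G x =>
        (⟨Quotient.mk _ (⟨((s : G), x), s.2⟩ : FixPair G X), rfl⟩ :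
          {q : Quotient (MulAction.orbitRel G (FixPair G X)) //
            pi2 G X q = Quotient.mk _ x})) ?_) ?_).symm
  · intro s t hst
    obtain ⟨u, hu⟩ := isConj_iff.1 hst
    apply Subtype.ext
    have h1 : (u : G) * (s : G) * (u : G)⁻¹ = (t : G) := by
      rw [← hu]; rfl
    have h2 : (u : G) • x = x := u.2
    have key : (u : G) • (⟨((s : G), x), s.2⟩ : FixPair G X) = ⟨((t : G), x), t.2⟩ := by
      apply Subtype.ext
      rw [FixPair.smul_def, h1, h2]
    exact orbit_mk_eq (u : G) key
  · constructor
    · rintro ⟨s⟩ ⟨t⟩ hst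
      obtain ⟨h, hh⟩ := Quotient.exact (Subtype.ext_iff.1 hst)
      simp only at hh
      have hv := congrArg Subtype.val hh
      rw [FixPair.smul_def] at hv
      obtain ⟨h1, h2⟩ := Prod.ext_iff.1 hv
      simp only at h1 h2
      have hmem : h ∈ MulAction.stabilizer G x := h2
      exact (Quotient.sound (isConj_iff.2 ⟨⟨h, hmem⟩, Subtype.ext h1⟩)).symm
    · rintro ⟨q, hq⟩
      obtain ⟨p, rfl⟩ := Quotient.exists_rep q
      obtain ⟨⟨g', x'⟩, hfix⟩ := p
      have hq' : (Quotient.mk _ x' : Quotient (MulAction.orbitRel G X)) = Quotient.mk _ x := hq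
      obtain ⟨h, hh⟩ := Quotient.exact hq'
      simp only at hh
      -- hh : h • x = x'
      have hfix' : g' • x' = x' := hfix
      have hmem : h⁻¹ * g' * h ∈ MulAction.stabilizer G x := by
        rw [MulAction.mem_stabilizer_iff]
        rw [mul_smul, mul_smul, hh, hfix', ← hh, inv_smul_smul]
      refine ⟨Quotient.mk _ (⟨h⁻¹ * g' * h, hmem⟩ : MulAction.stabilizer G x), ?_⟩
      apply Subtype.ext
      show Quotient.mk _ (⟨(h⁻¹ * g' * h, x), hmem⟩ : FixPair G X) = Quotient.mk _ _
      have key : h⁻¹ • (⟨(g', x'), hfix⟩ : FixPair G X) = ⟨(h⁻¹ * g' * h, x), hmem⟩ := by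
        apply Subtype.ext
        rw [FixPair.smul_def]
        have e1 : h⁻¹ * g' * h⁻¹⁻¹ = h⁻¹ * g' * h := by rw [inv_inv]
        have e2 : h⁻¹ • x' = x := by rw [← hh, inv_smul_smul]
        rw [e1, e2]
      exact (orbit_mk_eq h⁻¹ key).symm

end Maps


theorem nat_card_eq_sum_fibers {α β : Type*} [Fintype α] [Fintype β] (f : α → β) :
    Nat.card α = ∑ b, Nat.card {a // f a = b} := by
  classical
  simp_rw [Nat.card_eq_fintype_card]
  rw [← Fintype.card_sigma]
  exact Fintype.card_congr (Equiv.sigmaFiberEquiv f).symm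

/-- Let `G` be a finite group acting on a finite set `X`.  Then the sum, over
all conjugacy classes `[g]` of `G` with `g ≠ e`, of the number of orbits of the
centralizer `Z_g` acting on the fixed-point set `X^g`, equals the sum, over all
`G`-orbits of `X`, of (the number of conjugacy classes of the stabilizer `G_x`
of a point `x` in the orbit) minus `1`. -/
theorem sum_centralizer_orbit_counts_eq_sum_stabilizer_conjClasses
    (G : Type*) [Group G] [Finite G] (X : Type*) [Finite X] [MulAction G X] :
    ∑ᶠ c : ConjClasses G,
        (if c = 1 then 0 else centralizerOrbitCount G X (Quotient.out c))
      = ∑ᶠ O : Quotient (MulAction.orbitRel G X),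
          (Nat.card (ConjClasses ↥(MulAction.stabilizer G (Quotient.out O))) - 1) := by
  classical
  letI : Fintype (Quotient (MulAction.orbitRel G (FixPair G X))) := Fintype.ofFinite _
  letI : Fintype (ConjClasses G) := Fintype.ofFinite _
  letI : Fintype (Quotient (MulAction.orbitRel G X)) := Fintype.ofFinite _
  set f : ConjClasses G → ℕ := fun c => centralizerOrbitCount G X (Quotient.out c) with hf
  set k : Quotient (MulAction.orbitRel G X) → ℕ :=
    fun O => Nat.card (ConjClasses ↥(MulAction.stabilizer G (Quotient.out O))) with hk
  set N : ℕ := Nat.card (Quotient (MulAction.orbitRel G (FixPair G X))) with hN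
  set M : ℕ := Fintype.card (Quotient (MulAction.orbitRel G X)) with hM
  -- first count
  have h1 : N = ∑ c : ConjClasses G, f c := by
    rw [hN, nat_card_eq_sum_fibers (pi1 G X)]
    refine Finset.sum_congr rfl fun c _ => ?_
    have hc : ConjClasses.mk (Quotient.out c) = c := Quotient.out_eq c
    exact Nat.card_congr
      ((Equiv.subtypeEquivRight (fun q => by rw [hc])).trans (fiber1Equiv G X c.out))
  -- second count
  have h2 : N = ∑ O : Quotient (MulAction.orbitRel G X), k O := by
    rw [hN, nat_card_eq_sum_fibers (pi2 G X)]
    refine Finset.sum_congr rfl fun O _ => ?_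
    have hO : (Quotient.mk (MulAction.orbitRel G X) (Quotient.out O)) = O := Quotient.out_eq O
    exact Nat.card_congr
      ((Equiv.subtypeEquivRight (fun q => by rw [hO])).trans (fiber2Equiv G X O.out))
  -- value at the identity class
  have hone : (Quotient.out (1 : ConjClasses G)) = 1 := by
    have h : ConjClasses.mk (Quotient.out (1 : ConjClasses G)) = ConjClasses.mk 1 := by
      rw [← ConjClasses.one_eq_mk_one]
      exact Quotient.out_eq (1 : ConjClasses G)
    exact isConj_one_left.1 (ConjClasses.mk_eq_mk_iff_isConj.1 h)
  have hf1 : f 1 = M := by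
    rw [hf]
    simp only [hone]
    rw [centralizerOrbitCount, hM, ← Nat.card_eq_fintype_card]
    refine Nat.card_congr (Quotient.congr (Equiv.subtypeUnivEquiv (fun x => one_smul G x)) ?_)
    intro a b
    constructor
    · rintro ⟨h, -, hab⟩
      show (a : X) ∈ MulAction.orbit G (b : X)
      exact MulAction.mem_orbit_iff.2 ⟨h⁻¹, by rw [← hab, inv_smul_smul]⟩
    · intro hs
      have hs' : (a : X) ∈ MulAction.orbit G (b : X) := hs
      obtain ⟨m, hm⟩ := MulAction.mem_orbit_iff.1 hs'
      exact ⟨m⁻¹, by simp, by rw [← hm, inv_smul_smul]⟩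
  -- positivity of k
  have hkpos : ∀ O, 1 ≤ k O := by
    intro O
    rw [hk]
    have : Nonempty (ConjClasses ↥(MulAction.stabilizer G (Quotient.out O))) := ⟨1⟩
    exact Nat.one_le_iff_ne_zero.2 (Nat.card_pos).ne'
  -- LHS bookkeeping
  rw [finsum_eq_sum_of_fintype, finsum_eq_sum_of_fintype]
  have e0 : (if (1 : ConjClasses G) = 1 then 0 else f 1) = 0 := if_pos rfl
  have e1 : ∑ c : ConjClasses G, (if c = 1 then 0 else f c)
      = ∑ c ∈ Finset.univ.erase (1 : ConjClasses G), f c := by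
    rw [← Finset.add_sum_erase _ (fun c => if c = 1 then 0 else f c)
      (Finset.mem_univ (1 : ConjClasses G)), if_pos rfl, zero_add]
    exact Finset.sum_congr rfl fun c hc => if_neg (Finset.ne_of_mem_erase hc)
  have e2 : f 1 + ∑ c ∈ Finset.univ.erase (1 : ConjClasses G), f c
      = ∑ c : ConjClasses G, f c :=
    Finset.add_sum_erase _ f (Finset.mem_univ 1)
  have e3 : (∑ O : Quotient (MulAction.orbitRel G X), (k O - 1)) + M
      = ∑ O : Quotient (MulAction.orbitRel G X), k O := by
    rw [hM, ← Finset.card_univ, Finset.card_eq_sum_ones, ← Finset.sum_add_distrib]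
    exact Finset.sum_congr rfl fun O _ => Nat.sub_add_cancel (hkpos O)
  have key : (∑ c : ConjClasses G, (if c = 1 then 0 else f c)) + M
      = (∑ O : Quotient (MulAction.orbitRel G X), (k O - 1)) + M := by
    rw [e1, e3, ← h2, h1, ← e2, hf1]
    ring
  exact Nat.add_right_cancel key
end
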